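/- arXiv:0805.2518 — 5 statements merged into one kernel-verified Lean document; each statement's English description precedes it below -/
import Mathlib

section
/- Let d ≥ 1 be an integer and let Φ : (0,∞) → [0,∞) be continuous, decreasing, and such that Φ(t)·t^d → ∞ as t → 0. Then there exists a function Φ̂ : (0,∞) → [0,∞) such that Φ̂(t) ≤ Φ(t) for all t > 0, Φ̂(t)·t^d → ∞ as t → 0, Φ̂ is continuously differentiable on (0,∞), and for every a > 0 the function t ↦ e^{−a·Φ̂(t)}·Φ̂′(t) is bounded on (0,∞). -/
/-! In the variable `x = -log t`, the function `H x = min (max x 0) (Φ (e^{-x}) e^{-dx})` tends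
to `∞`. Its monotone lower envelope, averaged twice over windows of length one, is a `C¹` function
`G` with `0 ≤ G ≤ H`, `0 ≤ G' ≤ H` and `G → ∞`; put `Φ̂ t = G (-log t) / t^d`. Then `Φ̂ ≤ Φ` and
`Φ̂ t · t^d = G (-log t) → ∞`. Near `t = 0`, where `G ≥ 1`, the cap `G, G' ≤ x` together with
`d ≥ 1` gives `|Φ̂'| ≤ (d+1) Φ̂³`, and `e^{-aΦ̂} Φ̂³ ≤ 3!/a³`; away from `0`, `Φ̂'` is bounded
outright. -/

open Filter Set MeasureTheory

noncomputable def movingAverage (f : ℝ → ℝ) (x : ℝ) : ℝ :=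
  ∫ s in (x - 1)..x, f s

section MovingAverage

variable {f : ℝ → ℝ}

theorem movingAverage_eq_sub (hf : ∀ a b, IntervalIntegrable f volume a b) (x : ℝ) :
    movingAverage f x = (∫ s in (0 : ℝ)..x, f s) - ∫ s in (0 : ℝ)..(x - 1), f s :=
  (intervalIntegral.integral_interval_sub_left (hf _ _) (hf _ _)).symm

theorem continuous_movingAverage (hf : ∀ a b, IntervalIntegrable f volume a b) :
    Continuous (movingAverage f) := by
  simp_rw [funext (movingAverage_eq_sub hf)]
  exact (intervalIntegral.continuous_primitive hf 0).sub
    ((intervalIntegral.continuous_primitive hf 0).comp (continuous_sub_right 1))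

theorem hasDerivAt_movingAverage (hf : Continuous f) (x : ℝ) :
    HasDerivAt (movingAverage f) (f x - f (x - 1)) x := by
  have hprim (y : ℝ) := (hf.integral_hasStrictDerivAt 0 y).hasDerivAt
  have hshift := (hprim (x - 1)).comp x ((hasDerivAt_id x).sub_const 1)
  rw [mul_one] at hshift
  simp_rw [funext (movingAverage_eq_sub fun a b => hf.intervalIntegrable a b)]
  exact (hprim x).sub hshift

theorem contDiff_movingAverage (hf : Continuous f) : ContDiff ℝ 1 (movingAverage f) := by
  rw [contDiff_one_iff_deriv]
  refine ⟨fun x => (hasDerivAt_movingAverage hf x).differentiableAt, ?_⟩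
  rw [funext fun x => (hasDerivAt_movingAverage hf x).deriv]
  exact hf.sub (hf.comp (continuous_sub_right 1))

variable (hf : Monotone f)
include hf

theorem movingAverage_le (x : ℝ) : movingAverage f x ≤ f x := by
  simpa [movingAverage] using intervalIntegral.integral_mono_on (sub_le_self x zero_le_one)
    (hf.intervalIntegrable (μ := volume)) intervalIntegrable_const fun s hs => hf hs.2

theorem le_movingAverage (x : ℝ) : f (x - 1) ≤ movingAverage f x := by
  simpa [movingAverage] using intervalIntegral.integral_mono_on (sub_le_self x zero_le_one)
    intervalIntegrable_const (hf.intervalIntegrable (μ := volume)) fun s hs => hf hs.1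

theorem monotone_movingAverage : Monotone (movingAverage f) := by
  intro x y hxy
  have hshift (z : ℝ) : movingAverage f z = ∫ s in (0 : ℝ)..1, f (s + (z - 1)) := by
    simp [movingAverage, intervalIntegral.integral_comp_add_right]
  rw [hshift, hshift]
  exact intervalIntegral.integral_mono_on zero_le_one
    (hf.comp (monotone_id.add_const _)).intervalIntegrable
    (hf.comp (monotone_id.add_const _)).intervalIntegrable
    fun s _ => hf (by linarith)

end MovingAverage

noncomputable def lowerEnvelope (H : ℝ → ℝ) (s : ℝ) : ℝ :=
  sInf (H '' Ici s)

section LowerEnvelope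

variable {H : ℝ → ℝ}

theorem le_lowerEnvelope {s b : ℝ} (hb : ∀ y, s ≤ y → b ≤ H y) : b ≤ lowerEnvelope H s :=
  le_csInf (nonempty_Ici.image H) (by rintro _ ⟨y, hy, rfl⟩; exact hb y hy)

theorem lowerEnvelope_le (hH : BddBelow (range H)) {s y : ℝ} (h : s ≤ y) :
    lowerEnvelope H s ≤ H y :=
  csInf_le (hH.mono (image_subset_range _ _)) ⟨y, h, rfl⟩

theorem monotone_lowerEnvelope (hH : BddBelow (range H)) : Monotone (lowerEnvelope H) :=
  fun _ _ h => le_lowerEnvelope fun _ hy => lowerEnvelope_le hH (h.trans hy)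

theorem tendsto_lowerEnvelope (hH : Tendsto H atTop atTop) :
    Tendsto (lowerEnvelope H) atTop atTop := by
  refine tendsto_atTop.2 fun N => ?_
  obtain ⟨s, hs⟩ := eventually_atTop.1 (hH.eventually_ge_atTop N)
  exact eventually_atTop.2 ⟨s, fun s' hs' => le_lowerEnvelope fun y hy => hs y (hs'.trans hy)⟩

end LowerEnvelope

theorem exists_contDiff_minorant_tendsto_atTop {H : ℝ → ℝ} (hH₀ : ∀ x, 0 ≤ H x)
    (hH : Tendsto H atTop atTop) :
    ∃ G : ℝ → ℝ, ContDiff ℝ 1 G ∧ Tendsto G atTop atTop ∧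
      ∀ x, 0 ≤ G x ∧ G x ≤ H x ∧ 0 ≤ deriv G x ∧ deriv G x ≤ H x := by
  have hbdd : BddBelow (range H) := ⟨0, by rintro _ ⟨x, rfl⟩; exact hH₀ x⟩
  set c := lowerEnvelope H
  have hc : Monotone c := monotone_lowerEnvelope hbdd
  have hc₀ (x : ℝ) : 0 ≤ c x := le_lowerEnvelope fun y _ => hH₀ y
  set K := movingAverage c
  have hK : Monotone K := monotone_movingAverage hc
  have hK₀ (x : ℝ) : 0 ≤ K x := (hc₀ _).trans (le_movingAverage hc x)
  have hKH (x : ℝ) : K x ≤ H x :=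
    (movingAverage_le hc x).trans (lowerEnvelope_le hbdd le_rfl)
  have hKc : Continuous K := continuous_movingAverage fun _ _ => hc.intervalIntegrable
  refine ⟨movingAverage K, contDiff_movingAverage hKc, ?_, fun x => ?_⟩
  · have hc₂ : Tendsto (fun x => c (x - 1 - 1)) atTop atTop :=
      (tendsto_lowerEnvelope hH).comp <|
        (tendsto_atTop_add_const_right atTop (-2 : ℝ) tendsto_id).congr fun x => by simp; ring
    exact tendsto_atTop_mono
      (fun x => (le_movingAverage hc _).trans (le_movingAverage hK x)) hc₂
  rw [(hasDerivAt_movingAverage hKc x).deriv]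
  exact ⟨(hK₀ _).trans (le_movingAverage hK x), (movingAverage_le hK x).trans (hKH x),
    sub_nonneg.2 (hK (by linarith)), (sub_le_self _ (hK₀ _)).trans (hKH x)⟩

theorem Real.exp_neg_mul_mul_pow_le {a v : ℝ} (ha : 0 < a) (hv : 0 ≤ v) (n : ℕ) :
    Real.exp (-a * v) * v ^ n ≤ n.factorial / a ^ n := by
  have h := Real.pow_div_factorial_le_exp (a * v) (by positivity) n
  rw [div_le_iff₀ (by positivity), mul_pow] at h
  rw [le_div_iff₀ (by positivity), neg_mul, Real.exp_neg]
  calc (Real.exp (a * v))⁻¹ * v ^ n * a ^ n = (Real.exp (a * v))⁻¹ * (a ^ n * v ^ n) := by ring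
    _ ≤ (Real.exp (a * v))⁻¹ * (Real.exp (a * v) * n.factorial) := by gcongr
    _ = n.factorial := by field_simp

noncomputable def rescale (d : ℕ) (G : ℝ → ℝ) (t : ℝ) : ℝ :=
  G (-Real.log t) / t ^ d

section Rescale

variable {d : ℕ} {G : ℝ → ℝ} {t : ℝ}

theorem rescale_nonneg (hG₀ : 0 ≤ G (-Real.log t)) (ht : 0 ≤ t) : 0 ≤ rescale d G t :=
  div_nonneg hG₀ (pow_nonneg ht _)

theorem rescale_mul_pow (ht : 0 < t) : rescale d G t * t ^ d = G (-Real.log t) :=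
  div_mul_cancel₀ _ (pow_ne_zero _ ht.ne')

theorem hasDerivAt_rescale {G' : ℝ} (hG : HasDerivAt G G' (-Real.log t)) (ht : 0 < t) :
    HasDerivAt (rescale d G) (-(G' + d * G (-Real.log t)) / t ^ (d + 1)) t := by
  have hlog : HasDerivAt (fun u => -Real.log u) (-t⁻¹) t := (Real.hasDerivAt_log ht.ne').neg
  refine ((hG.comp t hlog).div (hasDerivAt_pow d t) (pow_ne_zero d ht.ne')).congr_deriv ?_
  rcases d with _ | d
  · simp [div_eq_mul_inv]
  · simp only [Function.comp_apply, Nat.add_sub_cancel]; push_cast; field_simp; ring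

theorem contDiffOn_rescale (hG : ContDiff ℝ 1 G) : ContDiffOn ℝ 1 (rescale d G) (Ioi 0) :=
  fun t ht => ((hG.contDiffAt.comp t (Real.contDiffAt_log.2 (ne_of_gt ht)).neg).div
    (contDiffAt_id.pow d) (pow_ne_zero _ (ne_of_gt ht))).contDiffWithinAt

theorem abs_deriv_rescale_le (hG : Differentiable ℝ G) (ht : 0 < t) {B : ℝ}
    (hG₀ : 0 ≤ G (-Real.log t)) (hGB : G (-Real.log t) ≤ B)
    (hG'₀ : 0 ≤ deriv G (-Real.log t)) (hG'B : deriv G (-Real.log t) ≤ B) :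
    |deriv (rescale d G) t| ≤ (d + 1) * B / t ^ (d + 1) := by
  rw [(hasDerivAt_rescale (hG _).hasDerivAt ht).deriv, abs_div, abs_neg,
    abs_of_nonneg (by positivity), abs_of_pos (by positivity)]
  gcongr
  nlinarith [(Nat.cast_nonneg d : (0 : ℝ) ≤ d)]

theorem abs_deriv_rescale_le_pow_three (hd : 1 ≤ d) (hG : Differentiable ℝ G) (ht : 0 < t)
    (hG₁ : 1 ≤ G (-Real.log t)) (hx₀ : 0 ≤ -Real.log t)
    (hGx : G (-Real.log t) ≤ -Real.log t) (hG'₀ : 0 ≤ deriv G (-Real.log t))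
    (hG'x : deriv G (-Real.log t) ≤ -Real.log t) :
    |deriv (rescale d G) t| ≤ (d + 1) * rescale d G t ^ 3 := by
  set x := -Real.log t
  have hv : t⁻¹ = Real.exp x := by rw [Real.exp_neg, Real.exp_log ht]
  have hv₁ : 1 ≤ t⁻¹ := hv ▸ Real.one_le_exp hx₀
  have hxv : x ≤ t⁻¹ := hv ▸ (Real.add_one_le_exp x).trans' (by linarith)
  have hP : t⁻¹ ^ d ≤ rescale d G t := by
    rw [rescale, div_eq_mul_inv, inv_pow]
    exact le_mul_of_one_le_left (by positivity) hG₁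
  calc |deriv (rescale d G) t| ≤ (d + 1) * x / t ^ (d + 1) :=
        abs_deriv_rescale_le hG ht (by linarith) hGx hG'₀ hG'x
    _ = (d + 1) * (x * t⁻¹ ^ (d + 1)) := by rw [inv_pow]; ring
    _ ≤ (d + 1) * (t⁻¹ ^ d * t⁻¹ ^ (2 * d)) := by
        gcongr (d + 1) * ?_
        exact mul_le_mul (hxv.trans (le_self_pow₀ hv₁ (by omega)))
          (pow_le_pow_right₀ hv₁ (by omega)) (by positivity) (by positivity)
    _ = (d + 1) * (t⁻¹ ^ d) ^ 3 := by ring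
    _ ≤ (d + 1) * rescale d G t ^ 3 := by gcongr

theorem exists_bound_exp_neg_mul_deriv_rescale (hd : 1 ≤ d) (hG : ContDiff ℝ 1 G)
    (hG_top : Tendsto G atTop atTop)
    (hG_bounds : ∀ x, 0 ≤ G x ∧ G x ≤ max x 0 ∧ 0 ≤ deriv G x ∧ deriv G x ≤ max x 0)
    {a : ℝ} (ha : 0 < a) :
    ∃ C, ∀ t ∈ Ioi (0 : ℝ), |Real.exp (-a * rescale d G t) * deriv (rescale d G) t| ≤ C := by
  have hGd : Differentiable ℝ G := hG.differentiable one_ne_zero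
  obtain ⟨x₁, hx₁⟩ := eventually_atTop.1 (hG_top.eventually_ge_atTop 1)
  set x₀ := max x₁ 0
  refine ⟨max ((d + 1) * x₀ * Real.exp x₀ ^ (d + 1)) ((d + 1) * (Nat.factorial 3 / a ^ 3)),
    fun t ht => ?_⟩
  set x := -Real.log t
  obtain ⟨hG₀, hGx, hG'₀, hG'x⟩ := hG_bounds x
  have hP₀ : 0 ≤ rescale d G t := rescale_nonneg hG₀ (le_of_lt ht)
  rw [abs_mul, abs_of_pos (Real.exp_pos _)]
  rcases le_total x x₀ with hx | hx
  · have hv : t⁻¹ = Real.exp x := by rw [Real.exp_neg, Real.exp_log ht]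
    refine le_max_of_le_left ?_
    calc Real.exp (-a * rescale d G t) * |deriv (rescale d G) t|
        ≤ 1 * ((d + 1) * max x 0 / t ^ (d + 1)) := by
          gcongr
          · exact Real.exp_le_one_iff.2 (by nlinarith)
          · exact abs_deriv_rescale_le hGd ht hG₀ hGx hG'₀ hG'x
      _ = (d + 1) * max x 0 * Real.exp x ^ (d + 1) := by rw [← hv, inv_pow]; ring
      _ ≤ (d + 1) * x₀ * Real.exp x₀ ^ (d + 1) := by gcongr; exact max_le hx (le_max_right _ _)
  · have hx₀ : 0 ≤ x := (le_max_right _ _).trans hx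
    rw [max_eq_left hx₀] at hGx hG'x
    refine le_max_of_le_right ?_
    calc Real.exp (-a * rescale d G t) * |deriv (rescale d G) t|
        ≤ Real.exp (-a * rescale d G t) * ((d + 1) * rescale d G t ^ 3) := by
          gcongr
          exact abs_deriv_rescale_le_pow_three hd hGd ht
            (hx₁ x ((le_max_left _ _).trans hx)) hx₀ hGx hG'₀ hG'x
      _ = (d + 1) * (Real.exp (-a * rescale d G t) * rescale d G t ^ 3) := by ring
      _ ≤ (d + 1) * (Nat.factorial 3 / a ^ 3) := by
          gcongr; exact Real.exp_neg_mul_mul_pow_le ha hP₀ 3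

end Rescale

theorem stmt0_general (d : ℕ) (hd : 1 ≤ d) (Φ : ℝ → ℝ)
    (hΦnn : ∀ t ∈ Set.Ioi (0:ℝ), 0 ≤ Φ t)
    (hΦtend : Tendsto (fun t => Φ t * t ^ d) (nhdsWithin 0 (Set.Ioi 0)) atTop) :
    ∃ Φhat : ℝ → ℝ,
      (∀ t ∈ Set.Ioi (0:ℝ), 0 ≤ Φhat t) ∧
      (∀ t ∈ Set.Ioi (0:ℝ), Φhat t ≤ Φ t) ∧
      Tendsto (fun t => Φhat t * t ^ d) (nhdsWithin 0 (Set.Ioi 0)) atTop ∧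
      ContDiffOn ℝ 1 Φhat (Set.Ioi 0) ∧
      (∀ a : ℝ, 0 < a → ∃ C : ℝ, ∀ t ∈ Set.Ioi (0:ℝ),
        |Real.exp (-a * Φhat t) * deriv Φhat t| ≤ C) := by
  have hexp : Tendsto (fun x => Real.exp (-x)) atTop (nhdsWithin 0 (Ioi 0)) :=
    tendsto_nhdsWithin_of_tendsto_nhds_of_eventually_within _
      Real.tendsto_exp_neg_atTop_nhds_zero (Eventually.of_forall fun x => Real.exp_pos _)
  obtain ⟨G, hG, hG_top, hG_bounds⟩ := exists_contDiff_minorant_tendsto_atTop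
    (H := fun x => min (max x 0) (Φ (Real.exp (-x)) * Real.exp (-x) ^ d))
    (fun x => le_min (le_max_right _ _)
      (mul_nonneg (hΦnn _ (Real.exp_pos _)) (pow_nonneg (Real.exp_pos _).le _)))
    (tendsto_inf_atTop _ (tendsto_atTop_mono (le_max_left · 0) tendsto_id) (hΦtend.comp hexp))
  refine ⟨rescale d G, fun t ht => ?_, fun t ht => ?_, ?_, contDiffOn_rescale hG,
    fun a ha => exists_bound_exp_neg_mul_deriv_rescale hd hG hG_top
      (fun x => ?_) ha⟩
  · exact rescale_nonneg (hG_bounds _).1 (le_of_lt ht)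
  · rw [rescale, div_le_iff₀ (pow_pos ht _)]
    simpa [Real.exp_log ht] using (hG_bounds (-Real.log t)).2.1.trans (min_le_right _ _)
  · exact (hG_top.comp (tendsto_neg_atBot_atTop.comp Real.tendsto_log_nhdsGT_zero)).congr'
      (eventually_nhdsWithin_of_forall fun t ht => (rescale_mul_pow ht).symm)
  · obtain ⟨h₀, hH, h'₀, hH'⟩ := hG_bounds x
    exact ⟨h₀, hH.trans (min_le_left _ _), h'₀, hH'.trans (min_le_left _ _)⟩

theorem stmt0 (d : ℕ) (hd : 1 ≤ d) (Φ : ℝ → ℝ)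
    (hΦnn : ∀ t ∈ Set.Ioi (0:ℝ), 0 ≤ Φ t)
    (hΦcont : ContinuousOn Φ (Set.Ioi 0))
    (hΦanti : AntitoneOn Φ (Set.Ioi 0))
    (hΦtend : Tendsto (fun t => Φ t * t ^ d) (nhdsWithin 0 (Set.Ioi 0)) atTop) :
    ∃ Φhat : ℝ → ℝ,
      (∀ t ∈ Set.Ioi (0:ℝ), 0 ≤ Φhat t) ∧
      (∀ t ∈ Set.Ioi (0:ℝ), Φhat t ≤ Φ t) ∧
      Tendsto (fun t => Φhat t * t ^ d) (nhdsWithin 0 (Set.Ioi 0)) atTop ∧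
      ContDiffOn ℝ 1 Φhat (Set.Ioi 0) ∧
      (∀ a : ℝ, 0 < a → ∃ C : ℝ, ∀ t ∈ Set.Ioi (0:ℝ),
        |Real.exp (-a * Φhat t) * deriv Φhat t| ≤ C) :=
  stmt0_general d hd Φ hΦnn hΦtend
end

section
/- Let φ satisfy (BB), (RP) and (T), and let λ > 0. Then there exists a set S ⊆ Λ_{2λ} \ Λ_λ, depending only on λ and d, such that for every finite set Z ⊆ Λ_λ having distances < λ one has Ũ_{φ,λ}(Z) = W_{φ_λ}(Z, Z̃ ∩ S) + U_{φ_λ}(Z), where Z̃ := ∪_{r∈ℤ^d}(Z + 2λr) is the 2λ-periodic continuation of Z. -/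
open MeasureTheory Filter Set
open scoped BigOperators ENNReal Topology

noncomputable section

/-- ℝ^d with the maximum norm. -/
abbrev Rd (d : ℕ) : Type := Fin d → ℝ

/-- ℤ^d. -/
abbrev Zd (d : ℕ) : Type := Fin d → ℤ

/-- The point y + 2λr. -/
def shiftPt {d : ℕ} (l : ℝ) (y : Rd d) (r : Zd d) : Rd d := fun i => y i + 2 * l * (r i : ℝ)

/-- Λ_λ = (−λ,λ]^d. -/
def Lam {d : ℕ} (l : ℝ) : Set (Rd d) := {x | ∀ i, -l < x i ∧ x i ≤ l}

/-- The open cube (−λ,λ)^d. -/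
def LamO {d : ℕ} (l : ℝ) : Set (Rd d) := {x | ∀ i, -l < x i ∧ x i < l}

/-- The periodic sum Σ_{r∈ℤ^d} φ(y+2λr) (= 0 by convention if not absolutely convergent). -/
def periodize {d : ℕ} (φ : Rd d → ℝ) (l : ℝ) (y : Rd d) : ℝ :=
  ∑' r : Zd d, φ (shiftPt l y r)

/-- φ_λ = 1_{(−λ,λ)^d} · Σ_{r∈ℤ^d} φ(·+2λr). -/
def philam {d : ℕ} (φ : Rd d → ℝ) (l : ℝ) : Rd d → ℝ :=
  (LamO l).indicator (periodize φ l)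

/-- U_ψ(Z): the sum of ψ(x−y) over unordered pairs of distinct points of Z
(for symmetric ψ). -/
def pairE {d : ℕ} (ψ : Rd d → ℝ) (Z : Finset (Rd d)) : ℝ :=
  (∑ x ∈ Z, ∑ y ∈ Z.erase x, ψ (x - y)) / 2

/-- The periodic energy Ũ_{φ,λ}(Z) = Σ_{{x,y}⊆Z} Σ_{r∈ℤ^d} φ(x−y+2λr). -/
def perE {d : ℕ} (φ : Rd d → ℝ) (l : ℝ) (Z : Finset (Rd d)) : ℝ :=
  (∑ x ∈ Z, ∑ y ∈ Z.erase x, periodize φ l (x - y)) / 2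

/-- Z has distances < λ. -/
def hasDistLt {d : ℕ} (l : ℝ) (Z : Finset (Rd d)) : Prop :=
  ∀ x ∈ Z, ∀ y ∈ Z, ∀ i, x i - y i ≠ l

/-- The 2λ-periodic continuation of Z. -/
def Ztilde {d : ℕ} (l : ℝ) (Z : Finset (Rd d)) : Set (Rd d) :=
  {y | ∃ x ∈ Z, ∃ r : Zd d, y = shiftPt l x r}

/-- W_ψ(Z, A) with A a (possibly infinite) set; the inner sum is a tsum. -/
def interES {d : ℕ} (ψ : Rd d → ℝ) (Z : Finset (Rd d)) (A : Set (Rd d)) : ℝ :=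
  ∑ x ∈ Z, ∑' y : A, ψ (x - (y : Rd d))

/-!
Write `ρ(v) = foldShift λ v ∈ {-1,0,1}^d`, so `ρ(v)_i = ±1` exactly when `±v_i > λ`. For `x, y ∈ Z`
the distance condition makes `x - y - 2λρ(x - y)` the unique translate of `x - y` by `2λℤ^d` lying
in the open cube `(-λ,λ)^d`. Hence `φ_λ(x - y)` is the periodic sum when `ρ(x - y) = 0` and vanishes
otherwise, so `Ũ - U_{φ_λ}` is half the sum of the periodic sums over the ordered pairs with
`ρ(x - y) ≠ 0`. Let `S` consist of the points `y + 2λr ∈ Λ_{2λ}` with `y ∈ Λ_λ` and `r`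
lexicographically positive. Among the translates of `y`, only `y + 2λρ(x - y)` sees `x` inside the
open cube; as `ρ` is odd, exactly one of `y + 2λρ(x - y)` and `x + 2λρ(y - x)` lies in `S`, so
`W_{φ_λ}(Z, Z̃ ∩ S)` counts each such unordered pair exactly once.
-/

lemma eq_of_abs_mul_sub_lt {c : ℝ} (hc : 0 < c) {m n : ℤ} (h : |c * m - c * n| < c) : m = n := by
  rw [← mul_sub, abs_mul, abs_of_pos hc, mul_lt_iff_lt_one_right hc] at h
  have h' : |m - n| < 1 := by exact_mod_cast h
  have := Int.abs_lt_one_iff.mp h'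
  omega

section Periodic

variable {d : ℕ} {l : ℝ}

lemma shiftPt_apply (l : ℝ) (y : Rd d) (r : Zd d) (i : Fin d) :
    shiftPt l y r i = y i + 2 * l * r i :=
  rfl

lemma shiftPt_zero (l : ℝ) (y : Rd d) : shiftPt l y 0 = y := by
  funext i
  simp [shiftPt]

lemma shiftPt_shiftPt (l : ℝ) (y : Rd d) (r s : Zd d) :
    shiftPt l (shiftPt l y r) s = shiftPt l y (r + s) := by
  funext i
  simp only [shiftPt, Pi.add_apply, Int.cast_add]
  ring

lemma sub_shiftPt (l : ℝ) (x y : Rd d) (r : Zd d) :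
    x - shiftPt l y r = shiftPt l (x - y) (-r) := by
  funext i
  simp only [shiftPt, Pi.sub_apply, Pi.neg_apply, Int.cast_neg]
  ring

lemma periodize_shiftPt (φ : Rd d → ℝ) (l : ℝ) (y : Rd d) (r : Zd d) :
    periodize φ l (shiftPt l y r) = periodize φ l y := by
  simp only [periodize, shiftPt_shiftPt]
  exact Equiv.tsum_eq (Equiv.addLeft r) fun s => φ (shiftPt l y s)

lemma periodize_neg {φ : Rd d → ℝ} (hsymm : ∀ x, φ (-x) = φ x) (l : ℝ) (y : Rd d) :
    periodize φ l (-y) = periodize φ l y := by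
  have h : ∀ s, shiftPt l (-y) s = -shiftPt l y (-s) := fun s => by
    funext i
    simp only [shiftPt, Pi.neg_apply, Int.cast_neg]
    ring
  simp only [periodize, h, hsymm]
  exact Equiv.tsum_eq (Equiv.neg (Zd d)) fun s => φ (shiftPt l y s)

lemma shiftPt_injective_of_mem_Lam (hl : 0 < l) {y y' : Rd d} {r r' : Zd d} (hy : y ∈ Lam l)
    (hy' : y' ∈ Lam l) (h : shiftPt l y r = shiftPt l y' r') : y = y' ∧ r = r' := by
  have hi : ∀ i, y i + 2 * l * r i = y' i + 2 * l * r' i := fun i => congrFun h i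
  have hr : r = r' := funext fun i => by
    refine (eq_of_abs_mul_sub_lt (by positivity) (abs_lt.mpr ⟨?_, ?_⟩)).symm <;>
      linarith [hi i, hy i, hy' i]
  subst hr
  exact ⟨funext fun i => by linarith [hi i], rfl⟩

lemma eq_of_sub_shiftPt_mem_LamO (hl : 0 < l) {x y : Rd d} {r s : Zd d}
    (hr : x - shiftPt l y r ∈ LamO l) (hs : x - shiftPt l y s ∈ LamO l) : r = s :=
  funext fun i => by
    have hri := hr i
    have hsi := hs i
    simp only [Pi.sub_apply, shiftPt_apply] at hri hsi
    refine (eq_of_abs_mul_sub_lt (by positivity) (abs_lt.mpr ⟨?_, ?_⟩)).symm <;> linarith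

end Periodic

section Fold

variable {d : ℕ} {l : ℝ}

def foldShift (l : ℝ) (v : Rd d) : Zd d :=
  fun i => if l < v i then 1 else if v i < -l then -1 else 0

lemma foldShift_neg (hl : 0 ≤ l) (v : Rd d) : foldShift l (-v) = -foldShift l v := by
  funext i
  simp only [foldShift, Pi.neg_apply]
  split_ifs <;> first | rfl | linarith

lemma foldShift_sub_comm (hl : 0 ≤ l) (x y : Rd d) :
    foldShift l (y - x) = -foldShift l (x - y) := by
  rw [← neg_sub, foldShift_neg hl]

lemma foldShift_zero (hl : 0 < l) : foldShift l (0 : Rd d) = 0 := by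
  funext i
  simp [foldShift, not_lt.mpr hl.le]

variable {x y : Rd d}

lemma sub_shiftPt_foldShift_mem_LamO (hx : x ∈ Lam l) (hy : y ∈ Lam l)
    (hxy : ∀ i, x i - y i ≠ l) (hyx : ∀ i, y i - x i ≠ l) :
    x - shiftPt l y (foldShift l (x - y)) ∈ LamO l := fun i => by
  obtain ⟨hx₁, hx₂⟩ := hx i
  obtain ⟨hy₁, hy₂⟩ := hy i
  rcases (hxy i).lt_or_gt with h₁ | h₁ <;> rcases (hyx i).lt_or_gt with h₂ | h₂ <;>
    simp only [foldShift, shiftPt, Pi.sub_apply] <;> split_ifs <;> push_cast <;>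
    constructor <;> linarith

lemma shiftPt_foldShift_mem_Lam_two_mul (hx : x ∈ Lam l) (hy : y ∈ Lam l) :
    shiftPt l y (foldShift l (x - y)) ∈ Lam (2 * l) := fun i => by
  obtain ⟨hx₁, hx₂⟩ := hx i
  obtain ⟨hy₁, hy₂⟩ := hy i
  simp only [foldShift, shiftPt, Pi.sub_apply]
  split_ifs <;> push_cast <;> constructor <;> linarith

lemma sub_mem_LamO_iff_foldShift_eq_zero (hl : 0 < l) (hx : x ∈ Lam l) (hy : y ∈ Lam l)
    (hxy : ∀ i, x i - y i ≠ l) (hyx : ∀ i, y i - x i ≠ l) :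
    x - y ∈ LamO l ↔ foldShift l (x - y) = 0 := by
  have hfold := sub_shiftPt_foldShift_mem_LamO hx hy hxy hyx
  constructor
  · intro h
    refine (eq_of_sub_shiftPt_mem_LamO hl (r := 0) ?_ hfold).symm
    rwa [shiftPt_zero]
  · intro h
    rwa [h, shiftPt_zero] at hfold

end Fold

-- `<` on `Lex (Zd d)` elaborates to the `Pi.Lex` instance rather than the linear order's, so the
-- order lemmas are instantiated explicitly and their conclusions are accepted up to unfolding.
lemma toLex_neg_pos_iff {d : ℕ} {r : Zd d} (hr : r ≠ 0) : 0 < toLex (-r) ↔ ¬ 0 < toLex r :=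
  ⟨fun h => ((neg_pos (a := toLex r)).mp h).not_gt,
    fun h => (neg_pos (a := toLex r)).mpr
      (((not_lt (a := 0) (b := toLex r)).mp h).lt_of_ne (toLex_eq_zero.not.mpr hr))⟩

section Decomposition

variable {d : ℕ} {l : ℝ} {Z : Finset (Rd d)} {x y : Rd d}

def positiveTranslates (d : ℕ) (l : ℝ) : Set (Rd d) :=
  {z | z ∈ Lam (2 * l) ∧ ∃ y ∈ Lam l, ∃ r : Zd d, 0 < toLex r ∧ z = shiftPt l y r}

lemma positiveTranslates_subset (hl : 0 < l) :
    positiveTranslates d l ⊆ Lam (2 * l) \ Lam l := by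
  rintro z ⟨hz, y, hy, r, hr, rfl⟩
  refine ⟨hz, fun hz' => hr.ne' ?_⟩
  obtain ⟨-, h⟩ := shiftPt_injective_of_mem_Lam hl hy hz' (shiftPt_zero l _).symm
  rw [h]
  rfl

lemma shiftPt_foldShift_mem_positiveTranslates_iff (hl : 0 < l) (hx : x ∈ Lam l)
    (hy : y ∈ Lam l) :
    shiftPt l y (foldShift l (x - y)) ∈ positiveTranslates d l ↔
      0 < toLex (foldShift l (x - y)) := by
  constructor
  · rintro ⟨-, y', hy', r, hr, h⟩
    obtain ⟨-, rfl⟩ := shiftPt_injective_of_mem_Lam hl hy hy' h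
    exact hr
  · exact fun h => ⟨shiftPt_foldShift_mem_Lam_two_mul hx hy, y, hy, _, h, rfl⟩

lemma philam_sub_eq (φ : Rd d → ℝ) (hl : 0 < l) (hZ : (Z : Set (Rd d)) ⊆ Lam l)
    (hdist : hasDistLt l Z) (hx : x ∈ Z) (hy : y ∈ Z) :
    philam φ l (x - y) = if foldShift l (x - y) = 0 then periodize φ l (x - y) else 0 := by
  have hiff := sub_mem_LamO_iff_foldShift_eq_zero hl (hZ hx) (hZ hy) (hdist x hx y hy)
    (hdist y hy x hx)
  split_ifs with h
  · exact Set.indicator_of_mem (hiff.mpr h) _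
  · exact Set.indicator_of_notMem (mt hiff.mp h) _

open Classical in
lemma tsum_philam_sub_Ztilde_inter_positiveTranslates (φ : Rd d → ℝ) (hl : 0 < l)
    (hZ : (Z : Set (Rd d)) ⊆ Lam l) (hdist : hasDistLt l Z) (hx : x ∈ Z) :
    ∑' z : ↑(Ztilde l Z ∩ positiveTranslates d l), philam φ l (x - z) =
      ∑ y ∈ Z, if shiftPt l y (foldShift l (x - y)) ∈ positiveTranslates d l then
        periodize φ l (x - y) else 0 := by
  set g : Rd d → Rd d := fun y => shiftPt l y (foldShift l (x - y))
  have hcube : ∀ y ∈ Z, x - g y ∈ LamO l := fun y hy =>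
    sub_shiftPt_foldShift_mem_LamO (hZ hx) (hZ hy) (hdist x hx y hy) (hdist y hy x hx)
  have hg : Set.InjOn g Z := fun y hy y' hy' h =>
    (shiftPt_injective_of_mem_Lam hl (hZ hy) (hZ hy') h).1
  have hsupport : ∀ z ∉ Z.image g,
      (Ztilde l Z ∩ positiveTranslates d l).indicator (fun z => philam φ l (x - z)) z = 0 := by
    intro z hz
    rw [Set.indicator_apply_eq_zero]
    rintro ⟨⟨y, hy, r, rfl⟩, -⟩
    refine Set.indicator_of_notMem (fun hr => hz (Finset.mem_image.mpr ⟨y, hy, ?_⟩)) _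
    exact congrArg (shiftPt l y) (eq_of_sub_shiftPt_mem_LamO hl (hcube y hy) hr)
  rw [tsum_subtype _ fun z => philam φ l (x - z), tsum_eq_sum hsupport, Finset.sum_image hg]
  refine Finset.sum_congr rfl fun y hy => ?_
  have hZtilde : g y ∈ Ztilde l Z := ⟨y, hy, _, rfl⟩
  have hphilam : philam φ l (x - g y) = periodize φ l (x - y) := by
    rw [philam, Set.indicator_of_mem (hcube y hy), sub_shiftPt, periodize_shiftPt]
  simp only [Set.indicator_apply, Set.mem_inter_iff, hZtilde, true_and, hphilam, g]

open Classical in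
lemma interES_eq_sum_sum (φ : Rd d → ℝ) (hl : 0 < l) (hZ : (Z : Set (Rd d)) ⊆ Lam l)
    (hdist : hasDistLt l Z) :
    interES (philam φ l) Z (Ztilde l Z ∩ positiveTranslates d l) =
      ∑ x ∈ Z, ∑ y ∈ Z, if shiftPt l y (foldShift l (x - y)) ∈ positiveTranslates d l then
        periodize φ l (x - y) else 0 :=
  Finset.sum_congr rfl fun _ hx =>
    tsum_philam_sub_Ztilde_inter_positiveTranslates φ hl hZ hdist hx

open Classical in
lemma periodize_sub_sub_philam_sub (φ : Rd d → ℝ) (hsymm : ∀ x, φ (-x) = φ x) (hl : 0 < l)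
    (hZ : (Z : Set (Rd d)) ⊆ Lam l) (hdist : hasDistLt l Z) (hx : x ∈ Z) (hy : y ∈ Z) :
    periodize φ l (x - y) - philam φ l (x - y) =
      (if shiftPt l y (foldShift l (x - y)) ∈ positiveTranslates d l then
        periodize φ l (x - y) else 0) +
      if shiftPt l x (foldShift l (y - x)) ∈ positiveTranslates d l then
        periodize φ l (y - x) else 0 := by
  have hA := shiftPt_foldShift_mem_positiveTranslates_iff hl (hZ hx) (hZ hy)
  have hB := shiftPt_foldShift_mem_positiveTranslates_iff hl (hZ hy) (hZ hx)
  have hP : periodize φ l (y - x) = periodize φ l (x - y) := by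
    rw [← neg_sub, periodize_neg hsymm]
  rw [foldShift_sub_comm hl.le x y] at hB
  rw [philam_sub_eq φ hl hZ hdist hx hy, foldShift_sub_comm hl.le x y, hP]
  by_cases h0 : foldShift l (x - y) = 0
  · have hA' : shiftPt l y (foldShift l (x - y)) ∉ positiveTranslates d l := by
      rw [hA, h0]
      exact lt_irrefl (0 : Lex (Zd d))
    have hB' : shiftPt l x (-foldShift l (x - y)) ∉ positiveTranslates d l := by
      rw [hB, h0, neg_zero]
      exact lt_irrefl (0 : Lex (Zd d))
    rw [if_pos h0, if_neg hA', if_neg hB', sub_self, add_zero]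
  · by_cases hpos : 0 < toLex (foldShift l (x - y))
    · have hB' : shiftPt l x (-foldShift l (x - y)) ∉ positiveTranslates d l :=
        fun hb => (toLex_neg_pos_iff h0).mp (hB.mp hb) hpos
      simp [h0, hA.mpr hpos, hB']
    · have hA' : shiftPt l y (foldShift l (x - y)) ∉ positiveTranslates d l := mt hA.mp hpos
      simp [h0, hA', hB.mpr ((toLex_neg_pos_iff h0).mpr hpos)]

open Classical in
lemma perE_sub_pairE_philam (φ : Rd d → ℝ) (hsymm : ∀ x, φ (-x) = φ x) (hl : 0 < l)
    (hZ : (Z : Set (Rd d)) ⊆ Lam l) (hdist : hasDistLt l Z) :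
    perE φ l Z - pairE (philam φ l) Z =
      ∑ x ∈ Z, ∑ y ∈ Z, if shiftPt l y (foldShift l (x - y)) ∈ positiveTranslates d l then
        periodize φ l (x - y) else 0 := by
  have hdiag : ∀ x ∈ Z, periodize φ l (x - x) - philam φ l (x - x) = 0 := fun x hx => by
    rw [philam_sub_eq φ hl hZ hdist hx hx, sub_self, foldShift_zero hl, if_pos rfl, sub_self]
  rw [perE, pairE, ← sub_div, ← Finset.sum_sub_distrib]
  simp_rw [← Finset.sum_sub_distrib]
  rw [Finset.sum_congr rfl fun x hx => Finset.sum_erase Z (hdiag x hx),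
    Finset.sum_congr rfl fun x hx => Finset.sum_congr rfl fun y hy =>
    periodize_sub_sub_philam_sub φ hsymm hl hZ hdist hx hy]
  simp_rw [Finset.sum_add_distrib]
  rw [Finset.sum_comm (f := fun x y => if shiftPt l x (foldShift l (y - x)) ∈
    positiveTranslates d l then periodize φ l (y - x) else 0)]
  ring

end Decomposition

theorem stmt1_general (d : ℕ)
    (φ : Rd d → ℝ) (hsymm : ∀ x, φ (-x) = φ x)
    (l : ℝ) (hl : 0 < l) :
    ∃ S : Set (Rd d), S ⊆ Lam (2 * l) \ Lam l ∧
      ∀ Z : Finset (Rd d), (Z : Set (Rd d)) ⊆ Lam l → hasDistLt l Z →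
        perE φ l Z = interES (philam φ l) Z (Ztilde l Z ∩ S) + pairE (philam φ l) Z := by
  refine ⟨positiveTranslates d l, positiveTranslates_subset hl, fun Z hZ hdist => ?_⟩
  rw [interES_eq_sum_sum φ hl hZ hdist, ← perE_sub_pairE_philam φ hsymm hl hZ hdist]
  ring

theorem stmt1 (d : ℕ) (hd : 1 ≤ d)
    (φ : Rd d → ℝ) (hmeas : Measurable φ) (hsymm : ∀ x, φ (-x) = φ x)
    (M : ℝ) (hBB : ∀ x, -M ≤ φ x)
    (R : ℝ) (hR : 0 < R)
    (Φ : ℝ → ℝ) (hΦnn : ∀ t ∈ Set.Ioi (0:ℝ), 0 ≤ Φ t)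
    (hΦcont : ContinuousOn Φ (Set.Ioi 0)) (hΦanti : AntitoneOn Φ (Set.Ioi 0))
    (hΦtend : Tendsto (fun t => Φ t * t ^ d) (nhdsWithin 0 (Set.Ioi 0)) atTop)
    (hRP : ∀ x : Rd d, x ≠ 0 → ‖x‖ ≤ R → Φ ‖x‖ ≤ φ x)
    (hUB : ∀ r : ℝ, 0 < r → ∃ C, ∀ x : Rd d, r ≤ ‖x‖ → φ x ≤ C)
    (G ε : ℝ) (hε : 0 < ε)
    (hT : ∀ x : Rd d, R ≤ ‖x‖ → |φ x| ≤ G * ‖x‖ ^ (-(d:ℝ) - ε))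
    (l : ℝ) (hl : 0 < l) :
    ∃ S : Set (Rd d), S ⊆ Lam (2 * l) \ Lam l ∧
      ∀ Z : Finset (Rd d), (Z : Set (Rd d)) ⊆ Lam l → hasDistLt l Z →
        perE φ l Z = interES (philam φ l) Z (Ztilde l Z ∩ S) + pairE (philam φ l) Z :=
  stmt1_general d φ hsymm l hl
end
end

section
/- Let d ≥ 1 and λ₀ > 0. There exists a constant c ≥ 1 (depending only on d and λ₀) such that for all λ ≥ λ₀, every finite set Z ⊆ Λ_λ, and every k ∈ ℕ, setting Z_k := ∪_{r∈ℤ^d, |r|≤k} (Z + 2λr), one has (2k+1)^d·c^{−1}·Σ_{r∈ℤ^d} #(Z ∩ Q_1(r))² ≤ Σ_{r∈ℤ^d} #(Z_k ∩ Q_1(r))² ≤ (2k+1)^d·c·Σ_{r∈ℤ^d} #(Z ∩ Q_1(r))². -/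
open MeasureTheory Filter Set
open scoped BigOperators ENNReal Topology

noncomputable section

/-- The half-open unit cube Q_1(r). -/
def Qcube {d : ℕ} (δ : ℝ) (r : Zd d) : Set (Rd d) :=
  {x | ∀ i, δ * ((r i : ℝ) - 1/2) ≤ x i ∧ x i < δ * ((r i : ℝ) + 1/2)}

/-- #(A ∩ Q_δ(r)). -/
def cnt {d : ℕ} (A : Set (Rd d)) (δ : ℝ) (r : Zd d) : ℕ := (A ∩ Qcube δ r).ncard

/-- Z_k = ∪_{r∈ℤ^d, |r|≤k} (Z + 2λr). -/
def ZkS {d : ℕ} (l : ℝ) (Z : Finset (Rd d)) (k : ℕ) : Set (Rd d) :=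
  {y | ∃ x ∈ Z, ∃ r : Zd d, ‖r‖ ≤ (k : ℝ) ∧ y = shiftPt l x r}

/-!
With `n_r = #(A ∩ Q_1(r))`, the sum `∑ r, n_r²` counts pairs of points of `A` lying in a common
unit cube. Up to a factor `3^d` it equals the number of pairs at sup-distance `< 1`: such a pair
lies in neighbouring cubes `r, r + δ` with `δ ∈ {-1, 0, 1}^d`, and
`2 ∑ r, n_r n_(r+δ) ≤ ∑ r, n_r² + ∑ r, n_(r+δ)²`.
Close pairs are preserved by translations. For `Z ⊆ Λ_λ` the translates `Z + 2λs` are pairwise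
disjoint, which gives the lower bound; and two translates `Z + 2λs`, `Z + 2λt` with
`|s - t| > M`, where `2λM ≥ 1`, contain no close pair, so only `(2k+1)^d (2M+1)^d` pairs of
translates contribute to the upper bound.
-/

open scoped Finset

lemma Finset.card_filter_prod_eq_sum_mul {α β : Type*} [DecidableEq β] (f : α → β) (e : β → β)
    (A B : Finset α) :
    #{p ∈ A ×ˢ B | f p.2 = e (f p.1)} =
      ∑ r ∈ A.image f, #{x ∈ A | f x = r} * #{y ∈ B | f y = e r} := by
  rw [Finset.card_eq_sum_card_fiberwise (f := fun p => f p.1) (t := A.image f)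
    fun p hp => Finset.mem_image_of_mem f (Finset.mem_product.mp (Finset.mem_filter.mp hp).1).1]
  refine Finset.sum_congr rfl fun r _ => ?_
  rw [← Finset.card_product]
  congr 1
  ext ⟨x, y⟩
  simp only [Finset.mem_filter, Finset.mem_product]
  constructor
  · rintro ⟨⟨⟨hx, hy⟩, hxy⟩, rfl⟩
    exact ⟨⟨hx, rfl⟩, hy, hxy⟩
  · rintro ⟨⟨hx, rfl⟩, hy, hxy⟩
    exact ⟨⟨⟨hx, hy⟩, hxy⟩, rfl⟩

section ClosePairs

def closePairs {α : Type*} [PseudoMetricSpace α] (A B : Finset α) : Finset (α × α) :=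
  {p ∈ A ×ˢ B | dist p.1 p.2 < 1}

variable {α κ : Type*} [PseudoMetricSpace α] [DecidableEq α]

lemma sum_card_closePairs_le_of_pairwiseDisjoint {R : Finset κ} {T : κ → Finset α}
    (hT : (R : Set κ).PairwiseDisjoint T) :
    ∑ s ∈ R, #(closePairs (T s) (T s)) ≤ #(closePairs (R.biUnion T) (R.biUnion T)) := by
  rw [← Finset.card_biUnion]
  · refine Finset.card_le_card <| Finset.biUnion_subset.mpr fun s hs => ?_
    exact Finset.filter_subset_filter _ <| Finset.product_subset_product
      (Finset.subset_biUnion_of_mem T hs) (Finset.subset_biUnion_of_mem T hs)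
  · intro s hs t ht hst
    refine Finset.disjoint_left.mpr fun p hp hp' => ?_
    simp only [closePairs, Finset.mem_filter, Finset.mem_product] at hp hp'
    exact Finset.disjoint_left.mp (hT hs ht hst) hp.1.1 hp'.1.1

lemma card_closePairs_biUnion_le (R : Finset κ) (T : κ → Finset α) :
    #(closePairs (R.biUnion T) (R.biUnion T)) ≤ ∑ q ∈ R ×ˢ R, #(closePairs (T q.1) (T q.2)) := by
  refine le_trans (Finset.card_le_card fun p hp => ?_) Finset.card_biUnion_le
  simp only [closePairs, Finset.mem_filter, Finset.mem_product, Finset.mem_biUnion] at hp ⊢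
  obtain ⟨⟨⟨s, hs, hps⟩, ⟨t, ht, hpt⟩⟩, hp⟩ := hp
  exact ⟨(s, t), ⟨hs, ht⟩, ⟨hps, hpt⟩, hp⟩

end ClosePairs

lemma closePairs_image {α : Type*} [MetricSpace α] [DecidableEq α] {f : α → α} (hf : Isometry f)
    (A B : Finset α) :
    closePairs (A.image f) (B.image f) = (closePairs A B).image (Prod.map f f) := by
  ext ⟨x, y⟩
  simp only [closePairs, Finset.mem_filter, Finset.mem_product, Finset.mem_image, Prod.exists,
    Prod.map_apply, Prod.mk.injEq]
  constructor
  · rintro ⟨⟨⟨a, ha, rfl⟩, ⟨b, hb, rfl⟩⟩, hab⟩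
    exact ⟨a, b, ⟨⟨ha, hb⟩, by rwa [hf.dist_eq] at hab⟩, rfl, rfl⟩
  · rintro ⟨a, b, ⟨⟨ha, hb⟩, hab⟩, rfl, rfl⟩
    exact ⟨⟨⟨a, ha, rfl⟩, ⟨b, hb, rfl⟩⟩, by rwa [hf.dist_eq]⟩

lemma card_closePairs_image {α : Type*} [MetricSpace α] [DecidableEq α] {f : α → α}
    (hf : Isometry f) (A B : Finset α) :
    #(closePairs (A.image f) (B.image f)) = #(closePairs A B) := by
  rw [closePairs_image hf, Finset.card_image_of_injective _ (hf.injective.prodMap hf.injective)]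

lemma abs_floor_sub_floor_le_one {a b : ℝ} (h : |a - b| < 1) : |⌊a⌋ - ⌊b⌋| ≤ 1 := by
  rw [abs_lt] at h
  have ha : ⌊a⌋ < ⌊b⌋ + 2 := Int.floor_lt.mpr <| by
    push_cast; linarith [Int.lt_floor_add_one b]
  have hb : ⌊b⌋ < ⌊a⌋ + 2 := Int.floor_lt.mpr <| by
    push_cast; linarith [Int.lt_floor_add_one a]
  rw [abs_le]
  omega

section IntBox

variable (ι : Type*) [Fintype ι] [DecidableEq ι]

def intBox (k : ℕ) : Finset (ι → ℤ) := Fintype.piFinset fun _ => Finset.Icc (-(k : ℤ)) k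

variable {ι}

lemma mem_intBox {k : ℕ} {r : ι → ℤ} : r ∈ intBox ι k ↔ ∀ i, |r i| ≤ k := by
  simp only [intBox, Fintype.mem_piFinset, Finset.mem_Icc, abs_le]

lemma card_intBox (k : ℕ) : #(intBox ι k) = (2 * k + 1) ^ Fintype.card ι := by
  rw [intBox, Fintype.card_piFinset, Finset.prod_const, Int.card_Icc, Finset.card_univ]
  congr 1
  omega

lemma norm_le_iff_mem_intBox {k : ℕ} {r : ι → ℤ} : ‖r‖ ≤ k ↔ r ∈ intBox ι k := by
  rw [pi_norm_le_iff_of_nonneg (Nat.cast_nonneg k), mem_intBox]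
  refine forall_congr' fun i => ?_
  rw [Int.norm_eq_abs, ← Int.cast_abs]
  exact_mod_cast Iff.rfl

lemma card_filter_sub_mem_intBox_le (k M : ℕ) :
    #{q ∈ intBox ι k ×ˢ intBox ι k | q.2 - q.1 ∈ intBox ι M} ≤
      (2 * k + 1) ^ Fintype.card ι * (2 * M + 1) ^ Fintype.card ι := by
  rw [← card_intBox, ← card_intBox, ← Finset.card_product]
  refine Finset.card_le_card_of_injOn (fun q => (q.1, q.2 - q.1)) (fun q hq => ?_) ?_
  · simp only [Finset.coe_filter, Finset.mem_product, Set.mem_ofPred_eq] at hq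
    exact Finset.mem_product.mpr ⟨hq.1.1, hq.2⟩
  · rintro ⟨s, t⟩ - ⟨s', t'⟩ - h
    simp only [Prod.mk.injEq] at h ⊢
    obtain ⟨rfl, h⟩ := h
    exact ⟨rfl, sub_left_injective h⟩

end IntBox

section Cubes

variable {ι : Type*} [Fintype ι]

def cubeIndex (x : ι → ℝ) : ι → ℤ := fun i => ⌊x i + 1 / 2⌋

def cubeCount (A : Finset (ι → ℝ)) (r : ι → ℤ) : ℕ := #{x ∈ A | cubeIndex x = r}

def cubeEnergy (A : Finset (ι → ℝ)) : ℕ := ∑ r ∈ A.image cubeIndex, cubeCount A r ^ 2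

lemma cubeCount_eq_zero {A : Finset (ι → ℝ)} {r : ι → ℤ} (hr : r ∉ A.image cubeIndex) :
    cubeCount A r = 0 :=
  Finset.card_eq_zero.mpr <| Finset.filter_eq_empty_iff.mpr fun x hx hxr =>
    hr (Finset.mem_image.mpr ⟨x, hx, hxr⟩)

lemma sum_cubeCount_sq_le (A : Finset (ι → ℝ)) (S : Finset (ι → ℤ)) :
    ∑ r ∈ S, cubeCount A r ^ 2 ≤ cubeEnergy A :=
  Finset.sum_le_sum_of_ne_zero fun r _ hr => by
    by_contra h
    exact hr (by rw [cubeCount_eq_zero h, zero_pow two_ne_zero])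

lemma cubeEnergy_eq_card (A : Finset (ι → ℝ)) :
    cubeEnergy A = #{p ∈ A ×ˢ A | cubeIndex p.2 = cubeIndex p.1} := by
  simpa only [cubeEnergy, cubeCount, id, sq] using
    (Finset.card_filter_prod_eq_sum_mul cubeIndex id A A).symm

lemma dist_lt_one_of_cubeIndex_eq {x y : ι → ℝ} (h : cubeIndex y = cubeIndex x) :
    dist x y < 1 := by
  refine (dist_pi_lt_iff one_pos).mpr fun i => ?_
  rw [Real.dist_eq, ← add_sub_add_right_eq_sub (x i) (y i) (1 / 2)]
  exact Int.abs_sub_lt_one_of_floor_eq_floor (congrFun h i).symm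

lemma cubeIndex_sub_mem_intBox [DecidableEq ι] {x y : ι → ℝ} (h : dist x y < 1) :
    cubeIndex y - cubeIndex x ∈ intBox ι 1 := by
  refine mem_intBox.mpr fun i => ?_
  have hi : |(y i + 1 / 2) - (x i + 1 / 2)| < 1 := by
    rw [add_sub_add_right_eq_sub, ← Real.dist_eq, dist_comm]
    exact (dist_le_pi_dist x y i).trans_lt h
  exact_mod_cast abs_floor_sub_floor_le_one hi

lemma cubeEnergy_le_card_closePairs (A : Finset (ι → ℝ)) : cubeEnergy A ≤ #(closePairs A A) := by
  rw [cubeEnergy_eq_card]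
  exact Finset.card_le_card <| Finset.monotone_filter_right _ fun p _ => dist_lt_one_of_cubeIndex_eq

lemma two_mul_card_offsetPairs_le (A B : Finset (ι → ℝ)) (δ : ι → ℤ) :
    2 * #{p ∈ A ×ˢ B | cubeIndex p.2 = cubeIndex p.1 + δ} ≤ cubeEnergy A + cubeEnergy B := by
  rw [Finset.card_filter_prod_eq_sum_mul cubeIndex (· + δ), Finset.mul_sum]
  calc ∑ r ∈ A.image cubeIndex, 2 * (cubeCount A r * cubeCount B (r + δ))
      ≤ ∑ r ∈ A.image cubeIndex, (cubeCount A r ^ 2 + cubeCount B (r + δ) ^ 2) :=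
        Finset.sum_le_sum fun r _ => by rw [← mul_assoc]; exact two_mul_le_add_sq _ _
    _ ≤ cubeEnergy A + cubeEnergy B := by
        have hshift : ∑ r ∈ A.image cubeIndex, cubeCount B (r + δ) ^ 2 =
            ∑ r ∈ (A.image cubeIndex).image (· + δ), cubeCount B r ^ 2 :=
          (Finset.sum_image (f := fun r => cubeCount B r ^ 2) fun _ _ _ _ => add_right_cancel).symm
        rw [Finset.sum_add_distrib, hshift]
        exact add_le_add le_rfl (sum_cubeCount_sq_le B _)

lemma two_mul_card_closePairs_le [DecidableEq ι] (A B : Finset (ι → ℝ)) :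
    2 * #(closePairs A B) ≤ 3 ^ Fintype.card ι * (cubeEnergy A + cubeEnergy B) := by
  have hcover : closePairs A B ⊆ (intBox ι 1).biUnion fun δ =>
      {p ∈ A ×ˢ B | cubeIndex p.2 = cubeIndex p.1 + δ} := by
    intro p hp
    rw [closePairs, Finset.mem_filter] at hp
    exact Finset.mem_biUnion.mpr ⟨_, cubeIndex_sub_mem_intBox hp.2,
      Finset.mem_filter.mpr ⟨hp.1, (add_sub_cancel _ _).symm⟩⟩
  calc 2 * #(closePairs A B)
      ≤ ∑ δ ∈ intBox ι 1, 2 * #{p ∈ A ×ˢ B | cubeIndex p.2 = cubeIndex p.1 + δ} := by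
        rw [← Finset.mul_sum]
        exact Nat.mul_le_mul_left 2 ((Finset.card_le_card hcover).trans Finset.card_biUnion_le)
    _ ≤ ∑ δ ∈ intBox ι 1, (cubeEnergy A + cubeEnergy B) :=
        Finset.sum_le_sum fun δ _ => two_mul_card_offsetPairs_le A B δ
    _ = 3 ^ Fintype.card ι * (cubeEnergy A + cubeEnergy B) := by
        rw [Finset.sum_const, card_intBox, smul_eq_mul]

lemma card_closePairs_self_le [DecidableEq ι] (A : Finset (ι → ℝ)) :
    #(closePairs A A) ≤ 3 ^ Fintype.card ι * cubeEnergy A := by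
  have h := two_mul_card_closePairs_le A A
  linarith

lemma cubeEnergy_image_le [DecidableEq ι] {f : (ι → ℝ) → ι → ℝ} (hf : Isometry f)
    (A : Finset (ι → ℝ)) : cubeEnergy (A.image f) ≤ 3 ^ Fintype.card ι * cubeEnergy A :=
  calc cubeEnergy (A.image f) ≤ #(closePairs (A.image f) (A.image f)) :=
        cubeEnergy_le_card_closePairs _
    _ = #(closePairs A A) := card_closePairs_image hf A A
    _ ≤ 3 ^ Fintype.card ι * cubeEnergy A := card_closePairs_self_le A

lemma card_closePairs_image_image_le [DecidableEq ι] {f g : (ι → ℝ) → ι → ℝ} (hf : Isometry f)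
    (hg : Isometry g) (A : Finset (ι → ℝ)) :
    #(closePairs (A.image f) (A.image g)) ≤ 9 ^ Fintype.card ι * cubeEnergy A := by
  refine Nat.le_of_mul_le_mul_left ?_ two_pos
  calc 2 * #(closePairs (A.image f) (A.image g))
      ≤ 3 ^ Fintype.card ι * (cubeEnergy (A.image f) + cubeEnergy (A.image g)) :=
        two_mul_card_closePairs_le _ _
    _ ≤ 3 ^ Fintype.card ι * (3 ^ Fintype.card ι * cubeEnergy A +
          3 ^ Fintype.card ι * cubeEnergy A) := by
        gcongr
        exacts [cubeEnergy_image_le hf A, cubeEnergy_image_le hg A]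
    _ = 2 * (9 ^ Fintype.card ι * cubeEnergy A) := by
        rw [show (9 : ℕ) = 3 * 3 from rfl, mul_pow]
        ring

end Cubes

section Periodic

variable {d : ℕ} {l : ℝ}

lemma isometry_shiftPt (l : ℝ) (s : Zd d) : Isometry (shiftPt l · s) :=
  Isometry.of_dist_eq fun x y => dist_add_right x y fun i => 2 * l * (s i : ℝ)

lemma lt_abs_shiftPt_sub {x y : Rd d} (hx : x ∈ Lam l) (hy : y ∈ Lam l) (s t : Zd d)
    (i : Fin d) : 2 * l * (|(s i : ℝ) - t i| - 1) < |shiftPt l x s i - shiftPt l y t i| := by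
  obtain ⟨hx₁, hx₂⟩ := hx i
  obtain ⟨hy₁, hy₂⟩ := hy i
  have hxy : |x i - y i| < 2 * l := abs_sub_lt_iff.mpr ⟨by linarith, by linarith⟩
  have hlat : |2 * l * ((s i : ℝ) - t i)| = 2 * l * |(s i : ℝ) - t i| := by
    rw [abs_mul, abs_of_pos (by linarith)]
  have hdiff : shiftPt l x s i - shiftPt l y t i = 2 * l * ((s i : ℝ) - t i) - -(x i - y i) := by
    simp only [shiftPt]; ring
  rw [hdiff]
  linarith [abs_sub_abs_le_abs_sub (2 * l * ((s i : ℝ) - t i)) (-(x i - y i)), abs_neg (x i - y i)]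

lemma pairwiseDisjoint_image_shiftPt {Z : Finset (Rd d)} (hZ : (Z : Set (Rd d)) ⊆ Lam l) :
    (Set.univ : Set (Zd d)).PairwiseDisjoint fun s => Z.image (shiftPt l · s) := by
  intro s _ t _ hst
  refine Finset.disjoint_left.mpr fun z hzs hzt => ?_
  obtain ⟨x, hx, rfl⟩ := Finset.mem_image.mp hzs
  obtain ⟨y, hy, hxy⟩ := Finset.mem_image.mp hzt
  obtain ⟨i, hi⟩ := Function.ne_iff.mp hst
  have hone : (1 : ℝ) ≤ |(s i : ℝ) - t i| := by
    rw [← Int.cast_sub, ← Int.cast_abs]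
    exact_mod_cast Int.one_le_abs (sub_ne_zero.mpr hi)
  have hl : 0 < l := by linarith [(hZ hx i).1, (hZ hx i).2]
  have := lt_abs_shiftPt_sub (hZ hx) (hZ hy) s t i
  rw [hxy, sub_self, abs_zero] at this
  nlinarith

lemma closePairs_image_shiftPt_eq_empty {Z : Finset (Rd d)} (hZ : (Z : Set (Rd d)) ⊆ Lam l)
    {M : ℕ} (hM : 1 ≤ 2 * l * M) {s t : Zd d} (hst : t - s ∉ intBox (Fin d) M) :
    closePairs (Z.image (shiftPt l · s)) (Z.image (shiftPt l · t)) = ∅ := by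
  obtain ⟨i, hi⟩ := not_forall.mp (mt mem_intBox.mpr hst)
  have hfar : (M : ℝ) + 1 ≤ |(s i : ℝ) - t i| := by
    rw [abs_sub_comm, ← Int.cast_sub, ← Int.cast_abs]
    exact_mod_cast (by simpa using hi : (M : ℤ) < |t i - s i|)
  refine Finset.filter_eq_empty_iff.mpr fun ⟨p₁, p₂⟩ hp hclose => ?_
  obtain ⟨hp₁, hp₂⟩ := Finset.mem_product.mp hp
  obtain ⟨x, hx, rfl⟩ := Finset.mem_image.mp hp₁
  obtain ⟨y, hy, rfl⟩ := Finset.mem_image.mp hp₂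
  have hnear : |shiftPt l x s i - shiftPt l y t i| < 1 := by
    rw [← Real.dist_eq]
    exact (dist_le_pi_dist _ _ i).trans_lt hclose
  have hl : 0 < l := by linarith [(hZ hx i).1, (hZ hx i).2]
  nlinarith [lt_abs_shiftPt_sub (hZ hx) (hZ hy) s t i]

def periodicExtension (l : ℝ) (Z : Finset (Rd d)) (k : ℕ) : Finset (Rd d) :=
  (intBox (Fin d) k).biUnion fun s => Z.image (shiftPt l · s)

lemma coe_periodicExtension (l : ℝ) (Z : Finset (Rd d)) (k : ℕ) :
    (periodicExtension l Z k : Set (Rd d)) = ZkS l Z k := by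
  ext y
  simp only [periodicExtension, ZkS, Finset.coe_biUnion, Finset.coe_image, Set.mem_iUnion,
    Set.mem_image, Finset.mem_coe, Set.mem_ofPred_eq, norm_le_iff_mem_intBox]
  constructor
  · rintro ⟨s, hs, x, hx, rfl⟩
    exact ⟨x, hx, s, hs, rfl⟩
  · rintro ⟨x, hx, s, hs, rfl⟩
    exact ⟨s, hs, x, hx, rfl⟩

lemma mem_Qcube_one_iff {x : Rd d} {r : Zd d} : x ∈ Qcube 1 r ↔ cubeIndex x = r := by
  simp only [Qcube, Set.mem_ofPred_eq, one_mul, funext_iff, cubeIndex, Int.floor_eq_iff]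
  refine forall_congr' fun i => ?_
  constructor <;> rintro ⟨h₁, h₂⟩ <;> constructor <;> linarith

lemma tsum_cnt_sq (A : Finset (Rd d)) :
    ∑' r : Zd d, (cnt (A : Set (Rd d)) 1 r : ℝ) ^ 2 = cubeEnergy A := by
  have hcnt (r : Zd d) : cnt (A : Set (Rd d)) 1 r = cubeCount A r := by
    rw [cnt, cubeCount, ← Set.ncard_coe_finset, Finset.coe_filter]
    congr 1
    ext x
    simp [mem_Qcube_one_iff]
  rw [tsum_eq_sum (s := A.image cubeIndex) fun r hr => by rw [hcnt, cubeCount_eq_zero hr]; simp]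
  simp only [hcnt, cubeEnergy, Nat.cast_sum, Nat.cast_pow]

lemma pow_mul_cubeEnergy_le {Z : Finset (Rd d)} (hZ : (Z : Set (Rd d)) ⊆ Lam l) (k : ℕ) :
    (2 * k + 1) ^ d * cubeEnergy Z ≤ 3 ^ d * cubeEnergy (periodicExtension l Z k) := by
  calc (2 * k + 1) ^ d * cubeEnergy Z = ∑ _s ∈ intBox (Fin d) k, cubeEnergy Z := by
        rw [Finset.sum_const, card_intBox, Fintype.card_fin, smul_eq_mul]
    _ ≤ ∑ s ∈ intBox (Fin d) k,
          #(closePairs (Z.image (shiftPt l · s)) (Z.image (shiftPt l · s))) :=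
        Finset.sum_le_sum fun s _ => by
          rw [card_closePairs_image (isometry_shiftPt l s)]
          exact cubeEnergy_le_card_closePairs Z
    _ ≤ #(closePairs (periodicExtension l Z k) (periodicExtension l Z k)) :=
        sum_card_closePairs_le_of_pairwiseDisjoint
          ((pairwiseDisjoint_image_shiftPt hZ).subset (Set.subset_univ _))
    _ ≤ 3 ^ d * cubeEnergy (periodicExtension l Z k) := by
        simpa using card_closePairs_self_le (periodicExtension l Z k)

lemma cubeEnergy_periodicExtension_le {Z : Finset (Rd d)} (hZ : (Z : Set (Rd d)) ⊆ Lam l)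
    {M : ℕ} (hM : 1 ≤ 2 * l * M) (k : ℕ) :
    cubeEnergy (periodicExtension l Z k) ≤
      (2 * k + 1) ^ d * ((2 * M + 1) * 9) ^ d * cubeEnergy Z := by
  let T : Zd d → Finset (Rd d) := fun s => Z.image (shiftPt l · s)
  let near := {q ∈ intBox (Fin d) k ×ˢ intBox (Fin d) k | q.2 - q.1 ∈ intBox (Fin d) M}
  calc cubeEnergy (periodicExtension l Z k)
      ≤ #(closePairs (periodicExtension l Z k) (periodicExtension l Z k)) :=
        cubeEnergy_le_card_closePairs _
    _ ≤ ∑ q ∈ intBox (Fin d) k ×ˢ intBox (Fin d) k, #(closePairs (T q.1) (T q.2)) :=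
        card_closePairs_biUnion_le _ _
    _ = ∑ q ∈ near, #(closePairs (T q.1) (T q.2)) :=
        (Finset.sum_filter_of_ne fun q _ hq => by
          by_contra h
          exact hq (by rw [closePairs_image_shiftPt_eq_empty hZ hM h, Finset.card_empty])).symm
    _ ≤ ∑ _q ∈ near, 9 ^ d * cubeEnergy Z :=
        Finset.sum_le_sum fun q _ => by
          simpa using card_closePairs_image_image_le (isometry_shiftPt l q.1)
            (isometry_shiftPt l q.2) Z
    _ ≤ (2 * k + 1) ^ d * (2 * M + 1) ^ d * (9 ^ d * cubeEnergy Z) := by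
        rw [Finset.sum_const, smul_eq_mul]
        gcongr
        simpa using card_filter_sub_mem_intBox_le (ι := Fin d) k M
    _ = (2 * k + 1) ^ d * ((2 * M + 1) * 9) ^ d * cubeEnergy Z := by
        rw [mul_pow]
        ring

end Periodic

theorem stmt5_general (d : ℕ) (lm0 : ℝ) (hlm0 : 0 < lm0) :
    ∃ c : ℝ, 1 ≤ c ∧ ∀ l : ℝ, lm0 ≤ l → ∀ Z : Finset (Rd d),
      (Z : Set (Rd d)) ⊆ Lam l → ∀ k : ℕ,
        (2 * (k:ℝ) + 1) ^ d * c⁻¹ * (∑' r : Zd d, ((cnt (Z : Set (Rd d)) 1 r : ℝ)) ^ 2) ≤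
          (∑' r : Zd d, ((cnt (ZkS l Z k) 1 r : ℝ)) ^ 2) ∧
        (∑' r : Zd d, ((cnt (ZkS l Z k) 1 r : ℝ)) ^ 2) ≤
          (2 * (k:ℝ) + 1) ^ d * c * ∑' r : Zd d, ((cnt (Z : Set (Rd d)) 1 r : ℝ)) ^ 2 := by
  obtain ⟨M, hM⟩ := exists_nat_ge (2 * lm0)⁻¹
  have hM₀ : 1 ≤ 2 * lm0 * M := (inv_le_iff_one_le_mul₀' (by positivity)).mp hM
  refine ⟨(((2 * M + 1) * 9) ^ d : ℕ), by exact_mod_cast Nat.one_le_pow _ _ (by omega),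
    fun l hl Z hZ k => ?_⟩
  have hMl : 1 ≤ 2 * l * M := hM₀.trans (by gcongr)
  have h3 : 3 ^ d ≤ ((2 * M + 1) * 9) ^ d := Nat.pow_le_pow_left (by omega) d
  have lower := (pow_mul_cubeEnergy_le hZ k).trans (Nat.mul_le_mul_right _ h3)
  have upper := cubeEnergy_periodicExtension_le hZ hMl k
  rw [← coe_periodicExtension, tsum_cnt_sq, tsum_cnt_sq]
  constructor
  · rw [mul_right_comm, mul_inv_le_iff₀ (by positivity)]
    exact_mod_cast lower.trans_eq (mul_comm _ _)
  · exact_mod_cast upper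

theorem stmt5 (d : ℕ) (hd : 1 ≤ d) (lm0 : ℝ) (hlm0 : 0 < lm0) :
    ∃ c : ℝ, 1 ≤ c ∧ ∀ l : ℝ, lm0 ≤ l → ∀ Z : Finset (Rd d),
      (Z : Set (Rd d)) ⊆ Lam l → ∀ k : ℕ,
        (2 * (k:ℝ) + 1) ^ d * c⁻¹ * (∑' r : Zd d, ((cnt (Z : Set (Rd d)) 1 r : ℝ)) ^ 2) ≤
          (∑' r : Zd d, ((cnt (ZkS l Z k) 1 r : ℝ)) ^ 2) ∧
        (∑' r : Zd d, ((cnt (ZkS l Z k) 1 r : ℝ)) ^ 2) ≤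
          (2 * (k:ℝ) + 1) ^ d * c * ∑' r : Zd d, ((cnt (Z : Set (Rd d)) 1 r : ℝ)) ^ 2 :=
  stmt5_general d lm0 hlm0
end
end

section
/- Let φ : ℝ^d → ℝ be measurable, symmetric (φ(−x) = φ(x)), bounded from below, and such that ∫_{{|x|≥a}} |φ(x)| dx < ∞ for every a > 0. For λ > 0 define φ̂_λ(y) := Σ_{r∈ℤ^d} φ(y+2λr) at every y where this series converges absolutely (which is the case for Lebesgue-almost every y ∈ ℝ^d) and φ̂_λ(y) := 0 otherwise; for N ∈ ℕ set Ũ_λ(x_1,…,x_N) := Σ_{1≤i<j≤N} φ̂_λ(x_i−x_j) and define the canonical partition function with periodic boundary condition Z_λ^{N,β} := ∫_{Λ_λ^N} exp(−β·Ũ_λ(x_1,…,x_N)) dx_1⋯dx_N ∈ (0,∞], with Z_λ^{0,β} := 1. Then for every compact set S ⊆ [0,∞)×(0,∞) there exists a constant k ≥ 1 such that for all N ∈ ℕ₀, λ > 0 and β > 0 with (N/(2λ)^d, β) ∈ S one has Z_λ^{N,β} ≤ (k/(2λ)^d)·Z_λ^{N+1,β}. -/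
open MeasureTheory Filter Set
open scoped BigOperators ENNReal Topology

noncomputable section

/-- Λ_λ^N. -/
def cube (d : ℕ) (l : ℝ) (N : ℕ) : Set (Fin N → Rd d) := {x | ∀ i, x i ∈ Lam l}

/-- Ũ_λ(x_1,…,x_N) = Σ_{i<j} φ̂_λ(x_i − x_j). -/
def UtN {d : ℕ} (φ : Rd d → ℝ) (l : ℝ) {N : ℕ} (x : Fin N → Rd d) : ℝ :=
  ∑ i : Fin N, ∑ j ∈ Finset.Ioi i, periodize φ l (x i - x j)

/-- The canonical partition function with periodic boundary condition,
as an extended-real-valued Lebesgue integral. -/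
def ZpartE {d : ℕ} (φ : Rd d → ℝ) (l β : ℝ) (N : ℕ) : ℝ≥0∞ :=
  ∫⁻ x in cube d l N, ENNReal.ofReal (Real.exp (-β * UtN φ l x))

/-!
Integrating out the last particle gives
`Z^{N+1} = ∫_{Λ^N} e^{-βŨ(x)} ∫_Λ e^{-β W(x,y)} dy dx` with `W(x,y) = Σ_i φ̂_λ(x_i - y)`,
so it suffices to bound `∫_Λ e^{-β W(x,·)}` below by a multiple of `|Λ| = (2λ)^d`, uniformly in
`x`. Discard the points of `Λ` within distance `a` of a periodic image `x_i + 2λr` of some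
particle; they cover at most `N (4a)^d`, which is `≤ |Λ|/4` for bounded density and small `a`.
At the remaining points `W(x,y) ≤ Σ_i Σ_r |φ(x_i - y + 2λr)|` only involves the tail
`|z| ≥ a` of `φ`, and since the sets `x_i + 2λr - Λ` are disjoint, the integral of this bound
is at most `N ∫_{|z|≥a} |φ|`. By Markov's inequality `W ≤ T` off another quarter of `Λ`,
hence `∫_Λ e^{-βW} ≥ e^{-βT} |Λ|/2`.
-/

section Periodization
variable {d : ℕ}

lemma continuous_shiftPt (l : ℝ) (r : Zd d) : Continuous fun y : Rd d => shiftPt l y r := by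
  unfold shiftPt; fun_prop

lemma continuous_shiftPt_sub (l : ℝ) (c : Rd d) (r : Zd d) :
    Continuous fun y => shiftPt l (c - y) r :=
  (continuous_shiftPt l r).comp (continuous_const.sub continuous_id)

lemma shiftPt_sub (l : ℝ) (c y : Rd d) (r : Zd d) :
    shiftPt l (c - y) r = shiftPt l c r - y := by
  funext j; simp only [shiftPt, Pi.sub_apply]; ring

lemma measurable_periodize {φ : Rd d → ℝ} (hφ : Measurable φ) (l : ℝ) :
    Measurable (periodize φ l) :=
  Measurable.tsum fun r => hφ.comp (continuous_shiftPt l r).measurable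

lemma periodize_le_toReal_tsum (φ : Rd d → ℝ) (l : ℝ) (y : Rd d) :
    periodize φ l y ≤ (∑' r, ENNReal.ofReal |φ (shiftPt l y r)|).toReal := by
  by_cases h : Summable fun r => φ (shiftPt l y r)
  · rw [← ENNReal.ofReal_tsum_of_nonneg (fun r => abs_nonneg _) h.abs,
      ENNReal.toReal_ofReal (tsum_nonneg fun r => abs_nonneg _)]
    exact h.tsum_le_tsum (fun r => le_abs_self _) h.abs
  · rw [periodize, tsum_eq_zero_of_not_summable h]
    exact ENNReal.toReal_nonneg

end Periodization

section InsertionEnergy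
variable {d : ℕ} (φ : Rd d → ℝ) (l : ℝ) {N : ℕ}

def insertionEnergy (x : Fin N → Rd d) (y : Rd d) : ℝ :=
  ∑ i, periodize φ l (x i - y)

lemma UtN_snoc (x : Fin N → Rd d) (y : Rd d) :
    UtN φ l (Fin.snoc x y : Fin (N + 1) → Rd d) = UtN φ l x + insertionEnergy φ l x y := by
  have hIoi {n : ℕ} (i : Fin n) (f : Fin n → ℝ) :
      ∑ j ∈ Finset.Ioi i, f j = ∑ j, if i < j then f j else 0 := by
    rw [← Finset.filter_lt_eq_Ioi, Finset.sum_filter]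
  simp only [UtN, insertionEnergy, hIoi, Fin.sum_univ_castSucc, Fin.snoc_castSucc, Fin.snoc_last,
    Fin.castSucc_lt_castSucc_iff, Fin.castSucc_lt_last, (Fin.le_last _).not_gt, if_true,
    if_false, add_zero, Finset.sum_const_zero, Finset.sum_add_distrib]

lemma measurable_UtN {φ : Rd d → ℝ} (hφ : Measurable φ) :
    Measurable fun x : Fin N → Rd d => UtN φ l x :=
  Finset.measurable_sum _ fun i _ => Finset.measurable_sum _ fun j _ =>
    (measurable_periodize hφ l).comp ((measurable_pi_apply i).sub (measurable_pi_apply j))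

end InsertionEnergy

section Cube
variable {d : ℕ}

lemma Lam_eq_pi (l : ℝ) : (Lam l : Set (Rd d)) = univ.pi fun _ => Ioc (-l) l := by
  ext x; simp [Lam]

lemma volume_Lam {l : ℝ} (hl : 0 < l) :
    volume (Lam l : Set (Rd d)) = ENNReal.ofReal ((2 * l) ^ d) := by
  rw [Lam_eq_pi, Real.volume_pi_Ioc, Finset.prod_const, Finset.card_univ, Fintype.card_fin,
    ← ENNReal.ofReal_pow (by linarith)]
  ring_nf

lemma measurableSet_Lam (l : ℝ) : MeasurableSet (Lam l : Set (Rd d)) :=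
  Lam_eq_pi l ▸ MeasurableSet.univ_pi fun _ => measurableSet_Ioc

lemma snoc_mem_cube_iff {l : ℝ} {N : ℕ} (x : Fin N → Rd d) (y : Rd d) :
    (Fin.snoc x y : Fin (N + 1) → Rd d) ∈ cube d l (N + 1) ↔ x ∈ cube d l N ∧ y ∈ Lam l := by
  simp only [cube, mem_ofPred_eq, Fin.forall_fin_succ', Fin.snoc_castSucc, Fin.snoc_last]

lemma lintegral_cube_succ (l : ℝ) (N : ℕ) {f : (Fin (N + 1) → Rd d) → ℝ≥0∞} (hf : Measurable f) :
    ∫⁻ z in cube d l (N + 1), f z = ∫⁻ x in cube d l N, ∫⁻ y in Lam l, f (Fin.snoc x y) := by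
  have e := (volume_preserving_piFinSuccAbove (fun _ : Fin (N + 1) => Rd d) (Fin.last N)).symm
  have he : ⇑(MeasurableEquiv.piFinSuccAbove (fun _ : Fin (N + 1) => Rd d) (Fin.last N)).symm =
      fun p => Fin.snoc p.2 p.1 := by
    funext p; exact Fin.insertNth_last' p.1 p.2
  rw [← e.setLIntegral_comp_preimage_emb (MeasurableEquiv.measurableEmbedding _), he]
  have hpre : (fun p : Rd d × (Fin N → Rd d) => (Fin.snoc p.2 p.1 : Fin (N + 1) → Rd d)) ⁻¹'
      cube d l (N + 1) = Lam l ×ˢ cube d l N := by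
    ext p; simp [snoc_mem_cube_iff, and_comm]
  have hsnoc : Measurable fun p : Rd d × (Fin N → Rd d) =>
      (Fin.snoc p.2 p.1 : Fin (N + 1) → Rd d) := he ▸ MeasurableEquiv.measurable _
  rw [hpre, Measure.volume_eq_prod, ← Measure.prod_restrict]
  exact lintegral_prod_symm' _ (hf.comp hsnoc)

end Cube

section PartitionFunction
variable {d : ℕ} {φ : Rd d → ℝ}

lemma ZpartE_succ (hφ : Measurable φ) (l β : ℝ) (N : ℕ) :
    ZpartE φ l β (N + 1) = ∫⁻ x in cube d l N, ENNReal.ofReal (Real.exp (-β * UtN φ l x)) *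
      ∫⁻ y in Lam l, ENNReal.ofReal (Real.exp (-β * insertionEnergy φ l x y)) := by
  rw [ZpartE, lintegral_cube_succ l N ((measurable_UtN l hφ).const_mul (-β)).exp.ennreal_ofReal]
  refine lintegral_congr fun x => ?_
  simp_rw [UtN_snoc, mul_add, Real.exp_add, ENNReal.ofReal_mul (Real.exp_nonneg _)]
  exact lintegral_const_mul' _ _ ENNReal.ofReal_ne_top

lemma ZpartE_le_inv_mul_ZpartE_succ (hφ : Measurable φ) {l β K : ℝ} (hK : 0 < K) (N : ℕ)
    (h : ∀ x : Fin N → Rd d,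
      ENNReal.ofReal K ≤ ∫⁻ y in Lam l, ENNReal.ofReal (Real.exp (-β * insertionEnergy φ l x y))) :
    ZpartE φ l β N ≤ ENNReal.ofReal K⁻¹ * ZpartE φ l β (N + 1) := by
  have hK1 : ENNReal.ofReal K⁻¹ * ENNReal.ofReal K = 1 := by
    rw [← ENNReal.ofReal_mul (inv_nonneg.2 hK.le), inv_mul_cancel₀ hK.ne', ENNReal.ofReal_one]
  calc ZpartE φ l β N = ENNReal.ofReal K⁻¹ * (ENNReal.ofReal K * ZpartE φ l β N) := by
        rw [← mul_assoc, hK1, one_mul]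
    _ ≤ ENNReal.ofReal K⁻¹ * ZpartE φ l β (N + 1) := by
        rw [ZpartE, ← lintegral_const_mul' _ _ ENNReal.ofReal_ne_top, ZpartE_succ hφ]
        refine mul_le_mul_right (lintegral_mono fun x => ?_) _
        rw [mul_comm]
        exact mul_le_mul_right (h x) _

end PartitionFunction

section Lattice
variable {d : ℕ} {l : ℝ}

lemma eq_of_shiftPt_eq {y y' : Rd d} {r r' : Zd d} (hy : y ∈ Lam l) (hy' : y' ∈ Lam l)
    (h : shiftPt l y r = shiftPt l y' r') : r = r' := by
  funext j
  have hj : 2 * l * ((r j : ℝ) - r' j) = y' j - y j := by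
    have := congrFun h j; simp only [shiftPt] at this; linarith
  obtain ⟨h1, h2⟩ := hy j
  obtain ⟨h1', h2'⟩ := hy' j
  have hl : 0 < 2 * l := by linarith
  have hlt : (r j : ℝ) - r' j < 1 := by nlinarith
  have hgt : -1 < (r j : ℝ) - r' j := by nlinarith
  have : r j - r' j < 1 ∧ -1 < r j - r' j := ⟨by exact_mod_cast hlt, by exact_mod_cast hgt⟩
  omega

lemma lintegral_Lam_tsum_shiftPt_le {g : Rd d → ℝ≥0∞} (hg : Measurable g) (c : Rd d) :
    ∫⁻ y in Lam l, ∑' r, g (shiftPt l (c - y) r) ≤ ∫⁻ z, g z := by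
  simp_rw [shiftPt_sub]
  have hm (r : Zd d) : Measurable fun y => g (shiftPt l c r - y) :=
    hg.comp (measurable_const.sub measurable_id)
  rw [lintegral_tsum fun r => (hm r).aemeasurable]
  have hemb (r : Zd d) : MeasurableEmbedding fun y : Rd d => shiftPt l c r - y :=
    (MeasurableEquiv.subLeft _).measurableEmbedding
  simp_rw [(Measure.measurePreserving_sub_left volume _).setLIntegral_comp_emb (hemb _) g]
  have hdisj :
      Pairwise (Function.onFun Disjoint fun r : Zd d => (shiftPt l c r - ·) '' Lam l) := by
    refine fun r r' hne => disjoint_left.2 ?_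
    rintro _ ⟨y, hy, rfl⟩ ⟨y', hy', he⟩
    refine hne (eq_of_shiftPt_eq hy hy' (funext fun j => ?_)).symm
    have := congrFun he j; simp only [shiftPt, Pi.sub_apply] at this ⊢; linarith
  rw [← lintegral_iUnion (fun r => (hemb r).measurableSet_image.2 (measurableSet_Lam l)) hdisj]
  exact setLIntegral_le_lintegral _ _

lemma volume_near_lattice_le (hl : 0 < l) {a : ℝ} (ha : 0 ≤ a) (c : ℝ) :
    volume {t ∈ Ioc (-l) l | ∃ k : ℤ, |c - t + 2 * l * k| < a} ≤ ENNReal.ofReal (4 * a) := by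
  rcases lt_or_ge l a with hla | hal
  · calc volume _ ≤ volume (Ioc (-l) l) := measure_mono (sep_subset _ _)
      _ ≤ ENNReal.ofReal (4 * a) := by
        rw [Real.volume_Ioc]; exact ENNReal.ofReal_le_ofReal (by linarith)
  set m := ⌊(-l - a - c) / (2 * l)⌋
  set p := c + 2 * l * (m + 1)
  -- only the translates `c + 2 l k` with `k = m + 1` or `k = m + 2` come `a`-close to `(-l, l]`
  have hsub : {t ∈ Ioc (-l) l | ∃ k : ℤ, |c - t + 2 * l * k| < a} ⊆
      Ioo (p - a) (p + a) ∪ Ioo (p + 2 * l - a) (p + 2 * l + a) := by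
    rintro t ⟨⟨ht1, ht2⟩, k, hk⟩
    rw [abs_lt] at hk
    have hmk : m < k := Int.floor_lt.2 (by rw [div_lt_iff₀ (by positivity)]; linarith)
    have hkm : k < m + 3 := by
      have := Int.lt_floor_add_one ((-l - a - c) / (2 * l))
      have : (k : ℝ) - 2 < (-l - a - c) / (2 * l) := by
        rw [lt_div_iff₀ (by positivity)]; linarith
      exact_mod_cast (by linarith : (k : ℝ) < m + 3)
    obtain rfl | rfl : k = m + 1 ∨ k = m + 2 := by omega
    · left; push_cast at hk; constructor <;> linarith
    · right; push_cast at hk; constructor <;> linarith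
  calc volume _ ≤ volume (Ioo (p - a) (p + a)) + volume (Ioo (p + 2 * l - a) (p + 2 * l + a)) :=
        (measure_mono hsub).trans (measure_union_le _ _)
    _ = ENNReal.ofReal (4 * a) := by
        rw [Real.volume_Ioo, Real.volume_Ioo, ← ENNReal.ofReal_add (by linarith) (by linarith)]
        ring_nf

lemma volume_Lam_inter_near_le (hl : 0 < l) {a : ℝ} (ha : 0 ≤ a) (c : Rd d) :
    volume (Lam l ∩ {y | ∃ r, ‖shiftPt l (c - y) r‖ < a}) ≤ ENNReal.ofReal (4 * a) ^ d := by
  calc volume (Lam l ∩ {y | ∃ r, ‖shiftPt l (c - y) r‖ < a})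
      ≤ volume (univ.pi fun j => {t ∈ Ioc (-l) l | ∃ k : ℤ, |c j - t + 2 * l * k| < a}) := by
        refine measure_mono ?_
        rintro y ⟨hy, r, hr⟩ j -
        exact ⟨hy j, r j, (norm_le_pi_norm _ j).trans_lt hr⟩
    _ = ∏ j, volume {t ∈ Ioc (-l) l | ∃ k : ℤ, |c j - t + 2 * l * k| < a} := volume_pi_pi _
    _ ≤ ∏ _j : Fin d, ENNReal.ofReal (4 * a) :=
        Finset.prod_le_prod' fun j _ => volume_near_lattice_le hl ha (c j)
    _ = ENNReal.ofReal (4 * a) ^ d := by rw [Finset.prod_const, Finset.card_univ, Fintype.card_fin]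

end Lattice

section InsertionBound
variable {d : ℕ} {N : ℕ}

def nearImages (l a : ℝ) (x : Fin N → Rd d) : Set (Rd d) :=
  {y | ∃ i r, ‖shiftPt l (x i - y) r‖ < a}

def absInsertionEnergy (φ : Rd d → ℝ) (l : ℝ) (x : Fin N → Rd d) (y : Rd d) : ℝ≥0∞ :=
  ∑ i, ∑' r, ENNReal.ofReal |φ (shiftPt l (x i - y) r)|

lemma isOpen_nearImages (l a : ℝ) (x : Fin N → Rd d) : IsOpen (nearImages l a x) := by
  simp only [nearImages, ofPred_exists]
  exact isOpen_iUnion fun i => isOpen_iUnion fun r =>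
    isOpen_lt (continuous_shiftPt_sub l (x i) r).norm continuous_const

lemma measurable_absInsertionEnergy {φ : Rd d → ℝ} (hφ : Measurable φ) (l : ℝ)
    (x : Fin N → Rd d) : Measurable (absInsertionEnergy φ l x) :=
  Finset.measurable_sum _ fun i _ => Measurable.tsum fun r =>
    (hφ.comp (continuous_shiftPt_sub l (x i) r).measurable).abs.ennreal_ofReal

lemma insertionEnergy_le_toReal_absInsertionEnergy (φ : Rd d → ℝ) (l : ℝ) (x : Fin N → Rd d)
    {y : Rd d} (h : absInsertionEnergy φ l x y ≠ ∞) :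
    insertionEnergy φ l x y ≤ (absInsertionEnergy φ l x y).toReal := by
  rw [absInsertionEnergy,
    ENNReal.toReal_sum fun i _ => ENNReal.sum_ne_top.1 h i (Finset.mem_univ i)]
  exact Finset.sum_le_sum fun i _ => periodize_le_toReal_tsum φ l _

lemma lintegral_absInsertionEnergy_le {φ : Rd d → ℝ} (hφ : Measurable φ) (l a : ℝ)
    (x : Fin N → Rd d) :
    ∫⁻ y in Lam l \ nearImages l a x, absInsertionEnergy φ l x y ≤
      N * ∫⁻ z in {z : Rd d | a ≤ ‖z‖}, ENNReal.ofReal |φ z| := by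
  have hfar : MeasurableSet {z : Rd d | a ≤ ‖z‖} :=
    measurableSet_le measurable_const measurable_norm
  set g := {z : Rd d | a ≤ ‖z‖}.indicator fun z => ENNReal.ofReal |φ z|
  have hg : Measurable g := (hφ.abs.ennreal_ofReal).indicator hfar
  have hfar_eq : ∀ y ∈ Lam l \ nearImages l a x,
      absInsertionEnergy φ l x y = ∑ i, ∑' r, g (shiftPt l (x i - y) r) := by
    rintro y ⟨-, hy⟩
    refine Finset.sum_congr rfl fun i _ => tsum_congr fun r => ?_
    have hr : shiftPt l (x i - y) r ∈ {z : Rd d | a ≤ ‖z‖} := not_lt.1 fun h => hy ⟨i, r, h⟩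
    simp only [g, indicator_of_mem hr]
  calc ∫⁻ y in Lam l \ nearImages l a x, absInsertionEnergy φ l x y
      = ∫⁻ y in Lam l \ nearImages l a x, ∑ i, ∑' r, g (shiftPt l (x i - y) r) :=
        setLIntegral_congr_fun ((measurableSet_Lam l).diff (isOpen_nearImages l a x).measurableSet)
          hfar_eq
    _ ≤ ∫⁻ y in Lam l, ∑ i, ∑' r, g (shiftPt l (x i - y) r) := lintegral_mono_set sdiff_subset
    _ = ∑ i, ∫⁻ y in Lam l, ∑' r, g (shiftPt l (x i - y) r) :=
        lintegral_finsetSum _ fun i _ => Measurable.tsum fun r =>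
          hg.comp (continuous_shiftPt_sub l (x i) r).measurable
    _ ≤ ∑ _i : Fin N, ∫⁻ z, g z :=
        Finset.sum_le_sum fun i _ => lintegral_Lam_tsum_shiftPt_le hg (x i)
    _ = N * ∫⁻ z in {z : Rd d | a ≤ ‖z‖}, ENNReal.ofReal |φ z| := by
        rw [Finset.sum_const, Finset.card_univ, Fintype.card_fin, nsmul_eq_mul,
          lintegral_indicator hfar]

lemma volume_Lam_inter_nearImages_le {l a : ℝ} (hl : 0 < l) (ha : 0 ≤ a) (x : Fin N → Rd d) :
    volume (Lam l ∩ nearImages l a x) ≤ N * ENNReal.ofReal (4 * a) ^ d := by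
  have : Lam l ∩ nearImages l a x = ⋃ i, Lam l ∩ {y | ∃ r, ‖shiftPt l (x i - y) r‖ < a} := by
    ext y; simp [nearImages]
  calc volume (Lam l ∩ nearImages l a x)
      ≤ ∑ i, volume (Lam l ∩ {y | ∃ r, ‖shiftPt l (x i - y) r‖ < a}) :=
        this ▸ measure_iUnion_fintype_le _ _
    _ ≤ ∑ _i : Fin N, ENNReal.ofReal (4 * a) ^ d :=
        Finset.sum_le_sum fun i _ => volume_Lam_inter_near_le hl ha (x i)
    _ = N * ENNReal.ofReal (4 * a) ^ d := by
        rw [Finset.sum_const, Finset.card_univ, Fintype.card_fin, nsmul_eq_mul]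

lemma sub_two_mul_le_volume_absInsertionEnergy_lt {φ : Rd d → ℝ} (hφ : Measurable φ)
    {l a T : ℝ} {q : ℝ≥0∞} (hl : 0 < l) (ha : 0 ≤ a) (hT : 0 < T) (x : Fin N → Rd d)
    (hnear : N * ENNReal.ofReal (4 * a) ^ d ≤ q)
    (htail : N * ∫⁻ z in {z : Rd d | a ≤ ‖z‖}, ENNReal.ofReal |φ z| ≤ q * ENNReal.ofReal T) :
    volume (Lam l : Set (Rd d)) - 2 * q ≤
      volume (Lam l \ nearImages l a x ∩ {y | absInsertionEnergy φ l x y < ENNReal.ofReal T}) := by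
  set H := absInsertionEnergy φ l x
  have hH : Measurable H := measurable_absInsertionEnergy hφ l x
  set A := Lam l \ nearImages l a x
  have hmarkov : volume ({y | ENNReal.ofReal T ≤ H y} ∩ A) ≤ q := by
    rw [← Measure.restrict_apply (measurableSet_le measurable_const hH)]
    refine (meas_ge_le_lintegral_div hH.aemeasurable (ENNReal.ofReal_pos.2 hT).ne'
      ENNReal.ofReal_ne_top).trans (ENNReal.div_le_of_le_mul ?_)
    exact (lintegral_absInsertionEnergy_le hφ l a x).trans htail
  have hcover : Lam l ⊆ A ∩ {y | H y < ENNReal.ofReal T} ∪ (Lam l ∩ nearImages l a x) ∪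
      ({y | ENNReal.ofReal T ≤ H y} ∩ A) := by
    intro y hy
    by_cases hyn : y ∈ nearImages l a x
    · exact Or.inl (Or.inr ⟨hy, hyn⟩)
    by_cases hyH : H y < ENNReal.ofReal T
    · exact Or.inl (Or.inl ⟨⟨hy, hyn⟩, hyH⟩)
    · exact Or.inr ⟨not_lt.1 hyH, hy, hyn⟩
  rw [tsub_le_iff_right, two_mul, ← add_assoc]
  refine (measure_mono hcover).trans ((measure_union_le _ _).trans ?_)
  gcongr
  refine (measure_union_le _ _).trans (add_le_add_right ?_ _)
  exact (volume_Lam_inter_nearImages_le hl ha x).trans hnear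

lemma ofReal_exp_mul_le_lintegral_insertionEnergy {φ : Rd d → ℝ} (hφ : Measurable φ)
    {l a β T : ℝ} {q : ℝ≥0∞} (hl : 0 < l) (ha : 0 ≤ a) (hβ : 0 ≤ β) (hT : 0 < T)
    (x : Fin N → Rd d) (hnear : N * ENNReal.ofReal (4 * a) ^ d ≤ q)
    (htail : N * ∫⁻ z in {z : Rd d | a ≤ ‖z‖}, ENNReal.ofReal |φ z| ≤ q * ENNReal.ofReal T) :
    ENNReal.ofReal (Real.exp (-β * T)) * (volume (Lam l : Set (Rd d)) - 2 * q) ≤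
      ∫⁻ y in Lam l, ENNReal.ofReal (Real.exp (-β * insertionEnergy φ l x y)) := by
  set G := Lam l \ nearImages l a x ∩ {y | absInsertionEnergy φ l x y < ENNReal.ofReal T}
  have hG : MeasurableSet G :=
    ((measurableSet_Lam l).diff (isOpen_nearImages l a x).measurableSet).inter
      (measurableSet_lt (measurable_absInsertionEnergy hφ l x) measurable_const)
  have hbound : ∀ y ∈ G, ENNReal.ofReal (Real.exp (-β * T)) ≤
      ENNReal.ofReal (Real.exp (-β * insertionEnergy φ l x y)) := by
    rintro y ⟨-, hy⟩
    have hE : insertionEnergy φ l x y ≤ T :=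
      (insertionEnergy_le_toReal_absInsertionEnergy φ l x hy.ne_top).trans
        (ENNReal.toReal_le_of_le_ofReal hT.le hy.le)
    exact ENNReal.ofReal_le_ofReal (Real.exp_le_exp.2 (by nlinarith))
  calc ENNReal.ofReal (Real.exp (-β * T)) * (volume (Lam l) - 2 * q)
      ≤ ENNReal.ofReal (Real.exp (-β * T)) * volume G := by
        gcongr; exact sub_two_mul_le_volume_absInsertionEnergy_lt hφ hl ha hT x hnear htail
    _ = ∫⁻ _ in G, ENNReal.ofReal (Real.exp (-β * T)) := (setLIntegral_const _ _).symm
    _ ≤ ∫⁻ y in G, ENNReal.ofReal (Real.exp (-β * insertionEnergy φ l x y)) :=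
        setLIntegral_mono' hG hbound
    _ ≤ ∫⁻ y in Lam l, ENNReal.ofReal (Real.exp (-β * insertionEnergy φ l x y)) :=
        lintegral_mono_set fun y hy => hy.1.1

end InsertionBound

lemma IsCompact.exists_one_le_forall_fst_le_and_snd_le {S : Set (ℝ × ℝ)} (hS : IsCompact S) :
    ∃ C : ℝ, 1 ≤ C ∧ ∀ p ∈ S, p.1 ≤ C ∧ p.2 ≤ C := by
  obtain ⟨C₁, hC₁⟩ := hS.bddAbove_image continuous_fst.continuousOn
  obtain ⟨C₂, hC₂⟩ := hS.bddAbove_image continuous_snd.continuousOn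
  refine ⟨max (max C₁ C₂) 1, le_max_right _ _, fun p hp => ⟨?_, ?_⟩⟩
  · exact (hC₁ (mem_image_of_mem _ hp)).trans ((le_max_left _ _).trans (le_max_left _ _))
  · exact (hC₂ (mem_image_of_mem _ hp)).trans ((le_max_right _ _).trans (le_max_left _ _))

lemma ofReal_le_lintegral_insertionEnergy_of_density_le {d : ℕ} (hd : d ≠ 0) {φ : Rd d → ℝ}
    (hφ : Measurable φ) {C I l β : ℝ} (hC : 1 ≤ C) (hI₀ : 0 ≤ I)
    (hI : ∫⁻ z in {z : Rd d | 1 / (16 * C) ≤ ‖z‖}, ENNReal.ofReal |φ z| ≤ ENNReal.ofReal I)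
    (hl : 0 < l) (hβ : 0 ≤ β) (hβC : β ≤ C) {N : ℕ} (hN : (N : ℝ) ≤ C * (2 * l) ^ d)
    (x : Fin N → Rd d) :
    ENNReal.ofReal (Real.exp (-(C * (4 * C * (I + 1)))) * ((2 * l) ^ d / 2)) ≤
      ∫⁻ y in Lam l, ENNReal.ofReal (Real.exp (-β * insertionEnergy φ l x y)) := by
  set T := 4 * C * (I + 1)
  have hT : 0 < T := by positivity
  have h4a : (4 * (1 / (16 * C))) ^ d ≤ 1 / (4 * C) := by
    rw [show 4 * (1 / (16 * C)) = 1 / (4 * C) by ring]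
    exact pow_le_of_le_one (by positivity) (by rw [div_le_one (by positivity)]; linarith) hd
  have hnear : (N : ℝ≥0∞) * ENNReal.ofReal (4 * (1 / (16 * C))) ^ d ≤
      ENNReal.ofReal ((2 * l) ^ d / 4) := by
    rw [← ENNReal.ofReal_pow (by positivity), ← ENNReal.ofReal_natCast,
      ← ENNReal.ofReal_mul (by positivity)]
    refine ENNReal.ofReal_le_ofReal ?_
    calc (N : ℝ) * (4 * (1 / (16 * C))) ^ d ≤ C * (2 * l) ^ d * (1 / (4 * C)) :=
          mul_le_mul hN h4a (by positivity) (by positivity)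
      _ = (2 * l) ^ d / 4 := by field_simp
  have htail : (N : ℝ≥0∞) * ∫⁻ z in {z : Rd d | 1 / (16 * C) ≤ ‖z‖}, ENNReal.ofReal |φ z| ≤
      ENNReal.ofReal ((2 * l) ^ d / 4) * ENNReal.ofReal T := by
    refine (mul_le_mul_right hI _).trans ?_
    rw [← ENNReal.ofReal_natCast, ← ENNReal.ofReal_mul (by positivity),
      ← ENNReal.ofReal_mul (by positivity)]
    refine ENNReal.ofReal_le_ofReal ?_
    calc (N : ℝ) * I ≤ C * (2 * l) ^ d * (I + 1) :=
          mul_le_mul hN (by linarith) hI₀ (by positivity)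
      _ = (2 * l) ^ d / 4 * T := by ring
  have hvol : volume (Lam l : Set (Rd d)) - 2 * ENNReal.ofReal ((2 * l) ^ d / 4) =
      ENNReal.ofReal ((2 * l) ^ d / 2) := by
    rw [volume_Lam hl, ← ENNReal.ofReal_ofNat 2, ← ENNReal.ofReal_mul (by norm_num),
      ← ENNReal.ofReal_sub _ (by positivity)]
    ring_nf
  calc ENNReal.ofReal (Real.exp (-(C * T)) * ((2 * l) ^ d / 2))
      ≤ ENNReal.ofReal (Real.exp (-β * T)) *
          (volume (Lam l : Set (Rd d)) - 2 * ENNReal.ofReal ((2 * l) ^ d / 4)) := by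
        rw [hvol, ← ENNReal.ofReal_mul (Real.exp_nonneg _)]
        exact ENNReal.ofReal_le_ofReal (by gcongr; nlinarith)
    _ ≤ _ := ofReal_exp_mul_le_lintegral_insertionEnergy hφ hl (by positivity) hβ hT x hnear htail

theorem stmt9_general (d : ℕ) (hd : 1 ≤ d)
    (φ : Rd d → ℝ) (hmeas : Measurable φ)
    (hint : ∀ a : ℝ, 0 < a →
      (∫⁻ x in {x : Rd d | a ≤ ‖x‖}, ENNReal.ofReal |φ x|) < ⊤) :
    ∀ S : Set (ℝ × ℝ), IsCompact S → S ⊆ Set.Ici (0:ℝ) ×ˢ Set.Ioi (0:ℝ) →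
      ∃ k : ℝ, 1 ≤ k ∧ ∀ N : ℕ, ∀ l β : ℝ, 0 < l → 0 < β →
        ((N : ℝ) / (2 * l) ^ d, β) ∈ S →
          ZpartE φ l β N ≤ ENNReal.ofReal (k / (2 * l) ^ d) * ZpartE φ l β (N + 1) := by
  intro S hS _
  obtain ⟨C, hC, hCS⟩ := hS.exists_one_le_forall_fst_le_and_snd_le
  set I := (∫⁻ z in {z : Rd d | 1 / (16 * C) ≤ ‖z‖}, ENNReal.ofReal |φ z|).toReal
  have hI : ∫⁻ z in {z : Rd d | 1 / (16 * C) ≤ ‖z‖}, ENNReal.ofReal |φ z| = ENNReal.ofReal I :=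
    (ENNReal.ofReal_toReal (hint _ (by positivity)).ne).symm
  set T := 4 * C * (I + 1)
  refine ⟨2 * Real.exp (C * T), by linarith [Real.one_le_exp (by positivity : 0 ≤ C * T)],
    fun N l β hl hβ hmem => ?_⟩
  obtain ⟨hρ, hβC⟩ := hCS _ hmem
  have hN : (N : ℝ) ≤ C * (2 * l) ^ d := by rwa [div_le_iff₀ (by positivity)] at hρ
  have hk : 2 * Real.exp (C * T) / (2 * l) ^ d = (Real.exp (-(C * T)) * ((2 * l) ^ d / 2))⁻¹ := by
    rw [Real.exp_neg]; field_simp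
  rw [hk]
  exact ZpartE_le_inv_mul_ZpartE_succ hmeas (by positivity) N fun x =>
    ofReal_le_lintegral_insertionEnergy_of_density_le (by omega) hmeas hC ENNReal.toReal_nonneg
      hI.le hl hβ.le hβC hN x

theorem stmt9 (d : ℕ) (hd : 1 ≤ d)
    (φ : Rd d → ℝ) (hmeas : Measurable φ) (hsymm : ∀ x, φ (-x) = φ x)
    (M : ℝ) (hBB : ∀ x, -M ≤ φ x)
    (hint : ∀ a : ℝ, 0 < a →
      (∫⁻ x in {x : Rd d | a ≤ ‖x‖}, ENNReal.ofReal |φ x|) < ⊤) :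
    ∀ S : Set (ℝ × ℝ), IsCompact S → S ⊆ Set.Ici (0:ℝ) ×ˢ Set.Ioi (0:ℝ) →
      ∃ k : ℝ, 1 ≤ k ∧ ∀ N : ℕ, ∀ l β : ℝ, 0 < l → 0 < β →
        ((N : ℝ) / (2 * l) ^ d, β) ∈ S →
          ZpartE φ l β N ≤ ENNReal.ofReal (k / (2 * l) ^ d) * ZpartE φ l β (N + 1) :=
  stmt9_general d hd φ hmeas hint
end
end

section
/- Let φ satisfy (RP), (T), (BB) and (WD), fix β > 0 and λ₀ > 0, and for each λ ≥ λ₀ let ∇φ̂_λ be a measurable weak gradient of φ̂_λ on (−λ,λ)^d \ {0}. Assume that sup_{λ ≥ λ₀} ∫_{Λ_λ} |∇φ̂_λ(x)|^p · e^{−β·φ̂_λ(x)} dx < ∞ for p = 1, 2, 3. Then for each i = 1, 2, 3 one has sup_{λ ≥ λ₀} ∫_{Λ_λ} |∇φ̂_λ(x)|^i · e^{−(iβ/3)·φ̂_λ(x)} dx < ∞. -/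
open MeasureTheory Filter Set
open scoped BigOperators ENNReal Topology

noncomputable section

/-- φ̂_λ = 1_{(−2λ,2λ)^d} · Σ_{r∈ℤ^d} φ(·+2λr). -/
def phihat {d : ℕ} (φ : Rd d → ℝ) (l : ℝ) : Rd d → ℝ :=
  (LamO (2 * l)).indicator (periodize φ l)

/-- g is a weak gradient of f on the open set U. -/
def IsWeakGrad {d : ℕ} (U : Set (Rd d)) (f : Rd d → ℝ) (g : Rd d → Rd d) : Prop :=
  LocallyIntegrableOn g U volume ∧
  ∀ ψ : Rd d → ℝ, ContDiff ℝ (⊤ : ℕ∞) ψ → HasCompactSupport ψ → tsupport ψ ⊆ U →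
    ∀ i : Fin d,
      (∫ x in U, f x * fderiv ℝ ψ x (Pi.single i 1)) = -∫ x in U, g x i * ψ x


lemma t_pow_le {t : ℝ} (ht : 0 ≤ t) {i : ℕ} (hi : i = 1 ∨ i = 2 ∨ i = 3) :
    t ^ i ≤ 1 + t ^ 3 := by
  rcases hi with rfl | rfl | rfl
  · nlinarith [mul_nonneg ht (sq_nonneg (t - 1)), sq_nonneg (t - 1), pow_nonneg ht 3]
  · nlinarith [mul_nonneg ht (sq_nonneg (t - 1)), sq_nonneg (t - 1), pow_nonneg ht 3]
  · nlinarith [pow_nonneg ht 3]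

def zn {d : ℕ} (r : Zd d) : ℕ := Finset.univ.sup fun i => (r i).natAbs

lemma zn_le {d : ℕ} (r : Zd d) (i : Fin d) : (r i).natAbs ≤ zn r := by
  unfold zn
  exact Finset.le_sup (f := fun j => (r j).natAbs) (Finset.mem_univ i)

def wq (q : ℝ) (t : ℤ) : ℝ := if t = 0 then 1 else |(t : ℝ)| ^ (-q)

lemma wq_nonneg (q : ℝ) (t : ℤ) : 0 ≤ wq q t := by
  unfold wq; split
  · exact zero_le_one
  · exact Real.rpow_nonneg (abs_nonneg _) _

lemma wq_summable {q : ℝ} (hq : 1 < q) : Summable (wq q) := by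
  have h1 : Summable (fun t : ℤ => |(t : ℝ)| ^ (-q)) := Real.summable_abs_int_rpow hq
  have h2 : Summable (fun t : ℤ => if t = 0 then (1:ℝ) else 0) := by
    apply summable_of_ne_finset_zero (s := {(0:ℤ)})
    intro b hb
    simp only [Finset.mem_singleton] at hb
    simp [hb]
  refine (h1.add h2).congr fun t => ?_
  by_cases h : t = 0
  · simp [wq, h, Real.zero_rpow (neg_ne_zero.mpr (by linarith : q ≠ 0))]
  · simp [wq, h]

lemma summable_pi_prod {w : ℤ → ℝ} (hw : Summable w) (h0 : ∀ t, 0 ≤ w t) :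
    ∀ n : ℕ, Summable (fun r : Fin n → ℤ => ∏ i, w (r i))
  | 0 => by
      apply summable_of_finite_support
      exact Set.Subsingleton.finite (fun a _ b _ => Subsingleton.elim a b)
  | (n + 1) => by
      have ih := summable_pi_prod hw h0 n
      have h := hw.mul_of_nonneg ih h0 (fun r => Finset.prod_nonneg fun i _ => h0 _)
      exact (Fin.consEquiv (fun _ : Fin (n + 1) => ℤ)).summable_iff.mp
        (h.congr fun p => by simp [Fin.consEquiv, Fin.prod_univ_succ])

lemma zn_rpow_le_prod {d : ℕ} (hd : 1 ≤ d) {ε : ℝ} (hε : 0 < ε) (r : Zd d)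
    (hm : 1 ≤ zn r) :
    ((zn r : ℝ)) ^ (-(d : ℝ) - ε) ≤ ∏ i, wq (((d : ℝ) + ε) / d) (r i) := by
  set q : ℝ := ((d : ℝ) + ε) / d with hqdef
  have hd0 : (0 : ℝ) < d := by exact_mod_cast hd
  have hq0 : 0 < q := by positivity
  have hm1 : (1 : ℝ) ≤ (zn r : ℝ) := by exact_mod_cast hm
  have key : ∀ i : Fin d, ((zn r : ℝ)) ^ (-q) ≤ wq q (r i) := by
    intro i
    by_cases h : r i = 0
    · simp only [wq, h, if_pos rfl]
      exact Real.rpow_le_one_of_one_le_of_nonpos hm1 (by linarith)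
    · simp only [wq, if_neg h]
      have habs : |(r i : ℝ)| ≤ (zn r : ℝ) := by
        have h2 : |r i| ≤ (zn r : ℤ) := by
          rw [Int.abs_eq_natAbs]; exact_mod_cast zn_le r i
        exact_mod_cast h2
      exact Real.rpow_le_rpow_of_nonpos
        (abs_pos.mpr (Int.cast_ne_zero.mpr h)) habs (by linarith)
  calc ((zn r : ℝ)) ^ (-(d : ℝ) - ε) = (((zn r : ℝ)) ^ (-q)) ^ (d : ℕ) := by
        rw [← Real.rpow_natCast (((zn r : ℝ)) ^ (-q)) d,
          ← Real.rpow_mul (by positivity)]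
        congr 1
        rw [hqdef, neg_mul, div_mul_cancel₀ _ (ne_of_gt hd0)]
        ring
    _ = ∏ _i : Fin d, ((zn r : ℝ)) ^ (-q) := by
        rw [Finset.prod_const, Finset.card_univ, Fintype.card_fin]
    _ ≤ ∏ i, wq q (r i) :=
        Finset.prod_le_prod (fun i _ => Real.rpow_nonneg (Nat.cast_nonneg _) _)
          (fun i _ => key i)


lemma shift_norm_lb {d : ℕ} (hd : 1 ≤ d) {l : ℝ} (hl : 0 < l) {y : Rd d}
    (hy : y ∈ Lam l) (r : Zd d) (hr : 1 ≤ zn r) :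
    l * (2 * (zn r : ℝ) - 1) ≤ ‖shiftPt l y r‖ := by
  have hne : (Finset.univ : Finset (Fin d)).Nonempty := ⟨⟨0, hd⟩, Finset.mem_univ _⟩
  obtain ⟨i, -, hi⟩ := Finset.exists_mem_eq_sup Finset.univ hne fun j => (r j).natAbs
  have hzn : (zn r : ℝ) = |(r i : ℝ)| := by
    have : ((r i).natAbs : ℤ) = |r i| := (Int.abs_eq_natAbs _).symm
    have h2 : (zn r : ℤ) = |r i| := by rw [← this]; exact_mod_cast hi
    exact_mod_cast congrArg (Int.cast : ℤ → ℝ) h2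
  have hyi : |y i| ≤ l := abs_le.mpr ⟨(hy i).1.le, (hy i).2⟩
  have hcomp : |y i + 2 * l * (r i : ℝ)| ≤ ‖shiftPt l y r‖ := by
    have := norm_le_pi_norm (shiftPt l y r) i
    simpa [shiftPt, Real.norm_eq_abs] using this
  have habs : |2 * l * (r i : ℝ)| = 2 * l * |(r i : ℝ)| := by
    rw [abs_mul, abs_of_nonneg (by linarith : (0:ℝ) ≤ 2 * l)]
  have h3 : 2 * l * |(r i : ℝ)| - |y i| ≤ |y i + 2 * l * (r i : ℝ)| := by
    calc 2 * l * |(r i : ℝ)| - |y i| ≤ |2 * l * (r i : ℝ) + y i| := by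
          have h4 := abs_add_le (2 * l * (r i : ℝ) + y i) (-(y i))
          simp only [add_neg_cancel_right, abs_neg] at h4
          linarith
      _ = |y i + 2 * l * (r i : ℝ)| := by rw [add_comm]
  calc l * (2 * (zn r : ℝ) - 1) = 2 * l * |(r i : ℝ)| - l := by rw [hzn]; ring
    _ ≤ 2 * l * |(r i : ℝ)| - |y i| := by linarith
    _ ≤ |y i + 2 * l * (r i : ℝ)| := h3
    _ ≤ ‖shiftPt l y r‖ := hcomp

lemma periodize_upper {d : ℕ} (hd : 1 ≤ d) (φ : Rd d → ℝ)
    (M : ℝ) (hBB : ∀ x, -M ≤ φ x) (R : ℝ) (hR : 0 < R)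
    (hUB : ∀ r : ℝ, 0 < r → ∃ C, ∀ x : Rd d, r ≤ ‖x‖ → φ x ≤ C)
    (G ε : ℝ) (hε : 0 < ε)
    (hT : ∀ x : Rd d, R ≤ ‖x‖ → |φ x| ≤ G * ‖x‖ ^ (-(d:ℝ) - ε))
    (lm0 : ℝ) (hlm0 : 0 < lm0) :
    ∃ K : ℝ, ∀ l : ℝ, lm0 ≤ l → ∀ y : Rd d, y ∈ Lam l → lm0 ≤ ‖y‖ →
      periodize φ l y ≤ K := by
  obtain ⟨C₁, hC₁⟩ := hUB lm0 hlm0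
  set A : ℝ := max C₁ M with hA
  set N : ℕ := ⌈R / lm0⌉₊ with hN
  set q : ℝ := ((d : ℝ) + ε) / d with hq
  have hd0 : (0 : ℝ) < d := by exact_mod_cast hd
  have hq1 : 1 < q := by
    rw [hq, lt_div_iff₀ hd0]; linarith
  set G' : ℝ := max G 0 with hG'
  set u : Zd d → ℝ := fun r =>
    if zn r ≤ N then A else G' * (lm0 * (2 * (zn r : ℝ) - 1)) ^ (-(d:ℝ) - ε) with hu
  -- summability of u
  have hsum_u : Summable u := by
    have hsplit : u = (fun r => if zn r ≤ N then A else 0) +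
        (fun r => if zn r ≤ N then 0 else
          G' * (lm0 * (2 * (zn r : ℝ) - 1)) ^ (-(d:ℝ) - ε)) := by
      funext r; by_cases h : zn r ≤ N <;> simp [hu, h]
    rw [hsplit]
    apply Summable.add
    · apply summable_of_ne_finset_zero
        (s := Fintype.piFinset fun _ : Fin d => Finset.Icc (-(N:ℤ)) (N:ℤ))
      intro r hr
      have : ¬ zn r ≤ N := by
        intro hzn
        apply hr
        rw [Fintype.mem_piFinset]
        intro i
        rw [Finset.mem_Icc]
        have h1 : (r i).natAbs ≤ N := le_trans (zn_le r i) hzn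
        have h2 : |r i| ≤ (N : ℤ) := by rw [Int.abs_eq_natAbs]; exact_mod_cast h1
        exact abs_le.mp h2
      simp [this]
    · set c : ℝ := G' * lm0 ^ (-(d:ℝ) - ε) with hc
      have hc0 : 0 ≤ c := by
        apply mul_nonneg (le_max_right G 0) (Real.rpow_nonneg hlm0.le _)
      apply Summable.of_nonneg_of_le
        (f := fun r : Zd d => c * ∏ i, wq q (r i))
      · intro r
        by_cases h : zn r ≤ N
        · simp [h]
        · simp only [if_neg h]
          apply mul_nonneg (le_max_right G 0) (Real.rpow_nonneg _ _)
          have hm : 1 ≤ zn r := by omega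
          have hz1 : (1:ℝ) ≤ (zn r : ℝ) := by exact_mod_cast hm
          nlinarith
      · intro r
        by_cases h : zn r ≤ N
        · simp only [if_pos h]
          exact mul_nonneg hc0 (Finset.prod_nonneg fun i _ => wq_nonneg q (r i))
        · simp only [if_neg h]
          push_neg at h
          have hm : 1 ≤ zn r := le_trans (Nat.one_le_iff_ne_zero.mpr (by omega)) le_rfl
          have hzr : (1 : ℝ) ≤ (zn r : ℝ) := by exact_mod_cast hm
          have hs1 : (0 : ℝ) < 2 * (zn r : ℝ) - 1 := by linarith
          have hrw : (lm0 * (2 * (zn r : ℝ) - 1)) ^ (-(d:ℝ) - ε)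
              = lm0 ^ (-(d:ℝ) - ε) * (2 * (zn r : ℝ) - 1) ^ (-(d:ℝ) - ε) :=
            Real.mul_rpow hlm0.le hs1.le
          have h1 : (2 * (zn r : ℝ) - 1) ^ (-(d:ℝ) - ε) ≤ ((zn r : ℝ)) ^ (-(d:ℝ) - ε) := by
            apply Real.rpow_le_rpow_of_nonpos (by linarith) (by linarith)
            linarith
          have h2 : ((zn r : ℝ)) ^ (-(d:ℝ) - ε) ≤ ∏ i, wq q (r i) :=
            zn_rpow_le_prod hd hε r hm
          calc G' * (lm0 * (2 * (zn r : ℝ) - 1)) ^ (-(d:ℝ) - ε)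
              = G' * lm0 ^ (-(d:ℝ) - ε) * (2 * (zn r : ℝ) - 1) ^ (-(d:ℝ) - ε) := by
                rw [hrw]; ring
            _ ≤ G' * lm0 ^ (-(d:ℝ) - ε) * ((zn r : ℝ)) ^ (-(d:ℝ) - ε) := by
                apply mul_le_mul_of_nonneg_left h1
                exact mul_nonneg (le_max_right G 0) (Real.rpow_nonneg hlm0.le _)
            _ ≤ c * ∏ i, wq q (r i) := by
                rw [hc]
                apply mul_le_mul_of_nonneg_left h2
                exact mul_nonneg (le_max_right G 0) (Real.rpow_nonneg hlm0.le _)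
      · exact (summable_pi_prod (wq_summable hq1) (wq_nonneg q) d).mul_left c
  refine ⟨∑' r, u r, ?_⟩
  intro l hl y hy hny
  have hl0 : 0 < l := lt_of_lt_of_le hlm0 hl
  -- termwise bound
  have hterm : ∀ r : Zd d, |φ (shiftPt l y r)| ≤ u r := by
    intro r
    by_cases h : zn r ≤ N
    · -- small r : the point is at distance ≥ lm0 from the origin
      have hnorm : lm0 ≤ ‖shiftPt l y r‖ := by
        by_cases hz : zn r = 0
        · have hr0 : ∀ i, r i = 0 := by
            intro i
            have := zn_le r i
            rw [hz, Nat.le_zero] at this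
            exact Int.natAbs_eq_zero.mp this
          have : shiftPt l y r = y := by
            funext i; simp [shiftPt, hr0 i]
          rw [this]; exact hny
        · have h1 : 1 ≤ zn r := Nat.one_le_iff_ne_zero.mpr hz
          have := shift_norm_lb hd hl0 hy r h1
          have hz1 : (1:ℝ) ≤ (zn r : ℝ) := by exact_mod_cast h1
          nlinarith
      have hup : φ (shiftPt l y r) ≤ A := le_trans (hC₁ _ hnorm) (le_max_left _ _)
      have hlo : -A ≤ φ (shiftPt l y r) :=
        le_trans (neg_le_neg (le_max_right C₁ M)) (hBB _)
      simp only [hu, if_pos h]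
      exact abs_le.mpr ⟨hlo, hup⟩
    · push_neg at h
      have hm : 1 ≤ zn r := by omega
      have hlb := shift_norm_lb hd hl0 hy r hm
      have hznN : (N : ℝ) < (zn r : ℝ) := by exact_mod_cast h
      have hRlm : R / lm0 ≤ (N : ℝ) := Nat.le_ceil _
      have hs1 : (0 : ℝ) < 2 * (zn r : ℝ) - 1 := by
        have : (1:ℝ) ≤ (zn r : ℝ) := by exact_mod_cast hm
        linarith
      have hRnorm : R ≤ ‖shiftPt l y r‖ := by
        have h1 : R ≤ lm0 * (2 * (zn r : ℝ) - 1) := by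
          have h2 : R / lm0 ≤ 2 * (zn r : ℝ) - 1 := by
            have : (N : ℝ) + 1 ≤ (zn r : ℝ) := by exact_mod_cast h
            linarith
          calc R = lm0 * (R / lm0) := by field_simp
            _ ≤ lm0 * (2 * (zn r : ℝ) - 1) := by
                apply mul_le_mul_of_nonneg_left h2 hlm0.le
        have h3 : lm0 * (2 * (zn r : ℝ) - 1) ≤ l * (2 * (zn r : ℝ) - 1) := by
          apply mul_le_mul_of_nonneg_right hl hs1.le
        linarith
      have hbd := hT _ hRnorm
      simp only [hu, if_neg (by omega : ¬ zn r ≤ N)]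
      calc |φ (shiftPt l y r)| ≤ G * ‖shiftPt l y r‖ ^ (-(d:ℝ) - ε) := hbd
        _ ≤ G' * ‖shiftPt l y r‖ ^ (-(d:ℝ) - ε) := by
            apply mul_le_mul_of_nonneg_right (le_max_left G 0)
            exact Real.rpow_nonneg (le_trans hR.le hRnorm) _
        _ ≤ G' * (lm0 * (2 * (zn r : ℝ) - 1)) ^ (-(d:ℝ) - ε) := by
            apply mul_le_mul_of_nonneg_left _ (le_max_right G 0)
            apply Real.rpow_le_rpow_of_nonpos (by positivity) _ (by linarith)
            calc lm0 * (2 * (zn r : ℝ) - 1) ≤ l * (2 * (zn r : ℝ) - 1) := by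
                  apply mul_le_mul_of_nonneg_right hl hs1.le
              _ ≤ ‖shiftPt l y r‖ := hlb
  have habs_sum : Summable (fun r : Zd d => |φ (shiftPt l y r)|) :=
    Summable.of_nonneg_of_le (fun r => abs_nonneg _) hterm hsum_u
  have hf_sum : Summable (fun r : Zd d => φ (shiftPt l y r)) :=
    summable_abs_iff.mp habs_sum
  exact Summable.tsum_le_tsum (fun r => le_trans (le_abs_self _) (hterm r)) hf_sum hsum_u

theorem stmt15 (d : ℕ) (hd : 1 ≤ d)
    (φ : Rd d → ℝ) (hmeas : Measurable φ) (hsymm : ∀ x, φ (-x) = φ x)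
    (M : ℝ) (hBB : ∀ x, -M ≤ φ x)
    (R : ℝ) (hR : 0 < R)
    (Φ : ℝ → ℝ) (hΦnn : ∀ t ∈ Set.Ioi (0:ℝ), 0 ≤ Φ t)
    (hΦcont : ContinuousOn Φ (Set.Ioi 0)) (hΦanti : AntitoneOn Φ (Set.Ioi 0))
    (hΦtend : Tendsto (fun t => Φ t * t ^ d) (nhdsWithin 0 (Set.Ioi 0)) atTop)
    (hRP : ∀ x : Rd d, x ≠ 0 → ‖x‖ ≤ R → Φ ‖x‖ ≤ φ x)
    (hUB : ∀ r : ℝ, 0 < r → ∃ C, ∀ x : Rd d, r ≤ ‖x‖ → φ x ≤ C)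
    (G ε : ℝ) (hε : 0 < ε)
    (hT : ∀ x : Rd d, R ≤ ‖x‖ → |φ x| ≤ G * ‖x‖ ^ (-(d:ℝ) - ε))
    (β : ℝ) (hβ : 0 < β)
    (gradφ : Rd d → Rd d) (hgmeas : Measurable gradφ)
    (hφcont : ContinuousOn φ ({0}ᶜ))
    (hWG : IsWeakGrad ({0}ᶜ : Set (Rd d)) φ gradφ)
    (hgbd : ∀ r : ℝ, 0 < r → ∃ C, ∀ x : Rd d, r ≤ ‖x‖ → ‖gradφ x‖ ≤ C)
    (hgL1 : (∫⁻ x : Rd d, ENNReal.ofReal (‖gradφ x‖ * Real.exp (-β * φ x))) < ⊤)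
    (hgL3 : (∫⁻ x : Rd d, ENNReal.ofReal (‖gradφ x‖ ^ 3 * Real.exp (-β * φ x))) < ⊤)
    (lm0 : ℝ) (hlm0 : 0 < lm0)
    (g : ℝ → Rd d → Rd d)
    (hg : ∀ l : ℝ, lm0 ≤ l → Measurable (g l) ∧
      IsWeakGrad (LamO l \ {0}) (phihat φ l) (g l))
    (hp : ∀ p : ℕ, p = 1 ∨ p = 2 ∨ p = 3 →
      ∃ C : ℝ, ∀ l : ℝ, lm0 ≤ l →
        (∫⁻ x in Lam (d := d) l,
            ENNReal.ofReal (‖g l x‖ ^ p * Real.exp (-β * phihat φ l x))) ≤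
          ENNReal.ofReal C) :
    ∀ i : ℕ, i = 1 ∨ i = 2 ∨ i = 3 →
      ∃ C : ℝ, ∀ l : ℝ, lm0 ≤ l →
        (∫⁻ x in Lam (d := d) l,
            ENNReal.ofReal (‖g l x‖ ^ i * Real.exp (-((i : ℝ) * β / 3) * phihat φ l x))) ≤
          ENNReal.ofReal C := by
  intro i hi
  obtain ⟨K, hK⟩ := periodize_upper hd φ M hBB R hR hUB G ε hε hT lm0 hlm0
  obtain ⟨Ci, hCi⟩ := hp i hi
  obtain ⟨C3, hC3⟩ := hp 3 (Or.inr (Or.inr rfl))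
  have hi3 : (i : ℝ) ≤ 3 := by rcases hi with rfl | rfl | rfl <;> norm_num
  have hi0 : (0 : ℝ) ≤ (i : ℝ) := Nat.cast_nonneg _
  refine ⟨(2 * lm0) ^ d + max C3 0 + Real.exp (β * |K|) * max Ci 0, ?_⟩
  intro l hl
  have hl0 : 0 < l := lt_of_lt_of_le hlm0 hl
  set B : Set (Rd d) := Metric.ball (0 : Rd d) lm0 with hBdef
  have hB : MeasurableSet B := measurableSet_ball
  have hLam : MeasurableSet (Lam (d := d) l) := by
    have : Lam (d := d) l = Set.pi Set.univ (fun _ : Fin d => Set.Ioc (-l) l) := by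
      ext x; simp [Lam, Set.mem_pi, Set.mem_Ioc]
    rw [this]
    exact MeasurableSet.univ_pi fun _ => measurableSet_Ioc
  -- phihat = periodize on Lam l
  have hsub : ∀ x ∈ Lam (d := d) l, phihat φ l x = periodize φ l x := by
    intro x hx
    apply Set.indicator_of_mem
    intro j
    constructor
    · have := (hx j).1; linarith
    · have := (hx j).2; linarith
  set μl := volume.restrict (Lam (d := d) l) with hμl
  set fint : Rd d → ℝ≥0∞ := fun x =>
    ENNReal.ofReal (‖g l x‖ ^ i * Real.exp (-((i : ℝ) * β / 3) * phihat φ l x)) with hfint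
  set F3 : Rd d → ℝ≥0∞ := fun x =>
    ENNReal.ofReal (‖g l x‖ ^ 3 * Real.exp (-β * phihat φ l x)) with hF3
  set Fi : Rd d → ℝ≥0∞ := fun x =>
    ENNReal.ofReal (‖g l x‖ ^ i * Real.exp (-β * phihat φ l x)) with hFi
  -- pointwise bound 1 (everywhere)
  have hpw1 : ∀ x, fint x ≤ F3 x + 1 := by
    intro x
    set a := ‖g l x‖ with ha
    set F := phihat φ l x with hF
    set t := a * Real.exp (-(β / 3) * F) with ht
    have ht0 : 0 ≤ t := mul_nonneg (norm_nonneg _) (Real.exp_pos _).le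
    have h1 : a ^ i * Real.exp (-((i : ℝ) * β / 3) * F) = t ^ i := by
      rw [ht, mul_pow, ← Real.exp_nat_mul]
      congr 2
      push_cast
      ring
    have h3 : t ^ 3 = a ^ 3 * Real.exp (-β * F) := by
      rw [ht, mul_pow, ← Real.exp_nat_mul]
      congr 2
      push_cast
      ring
    have h2 : t ^ i ≤ 1 + t ^ 3 := t_pow_le ht0 hi
    calc fint x = ENNReal.ofReal (t ^ i) := congrArg ENNReal.ofReal h1
      _ ≤ ENNReal.ofReal (1 + t ^ 3) := ENNReal.ofReal_le_ofReal h2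
      _ = 1 + ENNReal.ofReal (t ^ 3) := by
          rw [ENNReal.ofReal_add zero_le_one (pow_nonneg ht0 3), ENNReal.ofReal_one]
      _ = ENNReal.ofReal (t ^ 3) + 1 := add_comm _ _
      _ = F3 x + 1 := by
          have := congrArg ENNReal.ofReal h3
          exact congrArg (fun z => z + 1) this
  -- pointwise bound 2 (on Lam l outside the ball B)
  have hpw2 : ∀ x ∈ Lam (d := d) l, x ∉ B →
      fint x ≤ ENNReal.ofReal (Real.exp (β * |K|)) * Fi x := by
    intro x hx hxB
    have hnx : lm0 ≤ ‖x‖ := by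
      rw [hBdef] at hxB
      simp only [Metric.mem_ball, dist_zero_right, not_lt] at hxB
      exact hxB
    have hFK : phihat φ l x ≤ K := by
      rw [hsub x hx]
      exact hK l hl x hx hnx
    set a := ‖g l x‖ with ha
    set F := phihat φ l x with hF
    have hexp : Real.exp (-((i : ℝ) * β / 3) * F) ≤
        Real.exp (β * |K|) * Real.exp (-β * F) := by
      rw [← Real.exp_add]
      apply Real.exp_le_exp.mpr
      have hKabs : K ≤ |K| := le_abs_self K
      have habs0 : 0 ≤ |K| := abs_nonneg K
      nlinarith [mul_nonneg (mul_nonneg hβ.le (by linarith : (0:ℝ) ≤ 3 - (i:ℝ)))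
          (by linarith : (0:ℝ) ≤ |K| - F),
        mul_nonneg (mul_nonneg hi0 hβ.le) habs0]
    have hreal : a ^ i * Real.exp (-((i : ℝ) * β / 3) * F) ≤
        Real.exp (β * |K|) * (a ^ i * Real.exp (-β * F)) := by
      have h0 : 0 ≤ a ^ i := pow_nonneg (norm_nonneg _) i
      calc a ^ i * Real.exp (-((i : ℝ) * β / 3) * F)
          ≤ a ^ i * (Real.exp (β * |K|) * Real.exp (-β * F)) :=
            mul_le_mul_of_nonneg_left hexp h0
        _ = Real.exp (β * |K|) * (a ^ i * Real.exp (-β * F)) := by ring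
    calc fint x ≤ ENNReal.ofReal (Real.exp (β * |K|) * (a ^ i * Real.exp (-β * F))) :=
          ENNReal.ofReal_le_ofReal hreal
      _ = ENNReal.ofReal (Real.exp (β * |K|)) * Fi x := by
          rw [ENNReal.ofReal_mul (Real.exp_pos _).le]
  -- now the integral estimate
  have hsplit : ∫⁻ x in Lam (d := d) l, fint x =
      (∫⁻ x in B, fint x ∂μl) + ∫⁻ x in Bᶜ, fint x ∂μl :=
    (lintegral_add_compl fint hB).symm
  have hball : (∫⁻ x in B, fint x ∂μl) ≤
      ENNReal.ofReal (max C3 0) + ENNReal.ofReal ((2 * lm0) ^ d) := by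
    have h1 : (∫⁻ x in B, fint x ∂μl) ≤ ∫⁻ x in B, (F3 x + 1) ∂μl :=
      lintegral_mono fun x => hpw1 x
    have h2 : (∫⁻ x in B, (F3 x + 1) ∂μl) =
        (∫⁻ x in B, F3 x ∂μl) + ∫⁻ x in B, (1 : ℝ≥0∞) ∂μl := by
      exact lintegral_add_right _ measurable_const
    have h3 : (∫⁻ x in B, F3 x ∂μl) ≤ ENNReal.ofReal (max C3 0) := by
      calc (∫⁻ x in B, F3 x ∂μl) ≤ ∫⁻ x, F3 x ∂μl :=
            lintegral_mono' Measure.restrict_le_self le_rfl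
        _ ≤ ENNReal.ofReal C3 := hC3 l hl
        _ ≤ ENNReal.ofReal (max C3 0) := ENNReal.ofReal_le_ofReal (le_max_left _ _)
    have h4 : (∫⁻ _x in B, (1 : ℝ≥0∞) ∂μl) ≤ ENNReal.ofReal ((2 * lm0) ^ d) := by
      rw [lintegral_one, Measure.restrict_apply_univ]
      calc μl B ≤ volume B := Measure.le_iff'.mp Measure.restrict_le_self B
        _ = ENNReal.ofReal ((2 * lm0) ^ d) := by
            rw [hBdef, Real.volume_pi_ball 0 hlm0, Fintype.card_fin]
    calc (∫⁻ x in B, fint x ∂μl) ≤ (∫⁻ x in B, F3 x ∂μl) + ∫⁻ x in B, (1:ℝ≥0∞) ∂μl := by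
          rw [← h2]; exact h1
      _ ≤ ENNReal.ofReal (max C3 0) + ENNReal.ofReal ((2 * lm0) ^ d) := add_le_add h3 h4
  have houter : (∫⁻ x in Bᶜ, fint x ∂μl) ≤
      ENNReal.ofReal (Real.exp (β * |K|) * max Ci 0) := by
    have hae : ∀ᵐ x ∂(μl.restrict Bᶜ),
        fint x ≤ ENNReal.ofReal (Real.exp (β * |K|)) * Fi x := by
      have hmem1 : ∀ᵐ x ∂(μl.restrict Bᶜ), x ∈ Bᶜ := ae_restrict_mem hB.compl
      have hmem2 : ∀ᵐ x ∂(μl.restrict Bᶜ), x ∈ Lam (d := d) l :=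
        (ae_restrict_mem hLam).filter_mono (ae_mono Measure.restrict_le_self)
      filter_upwards [hmem1, hmem2] with x hx1 hx2
      exact hpw2 x hx2 hx1
    calc (∫⁻ x in Bᶜ, fint x ∂μl)
        ≤ ∫⁻ x in Bᶜ, ENNReal.ofReal (Real.exp (β * |K|)) * Fi x ∂μl :=
          lintegral_mono_ae hae
      _ = ENNReal.ofReal (Real.exp (β * |K|)) * ∫⁻ x in Bᶜ, Fi x ∂μl :=
          lintegral_const_mul' _ _ ENNReal.ofReal_ne_top
      _ ≤ ENNReal.ofReal (Real.exp (β * |K|)) * ENNReal.ofReal (max Ci 0) := by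
          apply mul_le_mul_right
          calc (∫⁻ x in Bᶜ, Fi x ∂μl) ≤ ∫⁻ x, Fi x ∂μl :=
                lintegral_mono' Measure.restrict_le_self le_rfl
            _ ≤ ENNReal.ofReal Ci := hCi l hl
            _ ≤ ENNReal.ofReal (max Ci 0) := ENNReal.ofReal_le_ofReal (le_max_left _ _)
      _ = ENNReal.ofReal (Real.exp (β * |K|) * max Ci 0) :=
          (ENNReal.ofReal_mul (Real.exp_pos _).le).symm
  calc (∫⁻ x in Lam (d := d) l, fint x) =
      (∫⁻ x in B, fint x ∂μl) + ∫⁻ x in Bᶜ, fint x ∂μl := hsplit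
    _ ≤ (ENNReal.ofReal (max C3 0) + ENNReal.ofReal ((2 * lm0) ^ d)) +
        ENNReal.ofReal (Real.exp (β * |K|) * max Ci 0) := add_le_add hball houter
    _ = ENNReal.ofReal ((2 * lm0) ^ d + max C3 0 + Real.exp (β * |K|) * max Ci 0) := by
        rw [← ENNReal.ofReal_add (le_max_right C3 0) (by positivity),
          ← ENNReal.ofReal_add (by positivity)
            (mul_nonneg (Real.exp_pos _).le (le_max_right Ci 0))]
        congr 1
        ring
end
end
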